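/- arXiv:2106.15207 — 6 statements merged into one kernel-verified Lean document; each statement's English description precedes it below -/
import Mathlib

section
/- Let P be a probability distribution over functions ψ: W → ℝ, where W ⊆ ℝ^d is a closed convex set, such that every ψ in the support of P is G-Lipschitz and β-smooth, and the expected function Ψ(w) := E_{ψ∼P}[ψ(w)] is μ-strongly convex on W. Then for any x, y ∈ W and any step-size η ≤ μ/β², the projected gradient step G(w; ψ, η) := Π_W(w − η∇ψ(w)) satisfies E_{ψ∼P} ‖G(x; ψ, η) − G(y; ψ, η)‖ ≤ (1 − ημ/2)‖x − y‖. -/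
open MeasureTheory Filter Topology
open scoped RealInnerProductSpace Gradient

/-!
Averaging the first-order Taylor bounds of the `β`-smooth samples shows that
`w ↦ E ∇ψ(w)` approximates `Ψ = E ψ` to first order on `W`. Strong convexity of `Ψ` is only
used in value form (so the gradient of `Ψ` in the hypothesis, which may be a junk value where
`Ψ` is not differentiable, drops out), and together with that approximation it yields strong
monotonicity of the mean gradient: `μ ‖x - y‖² ≤ ⟪E (∇ψ(x) - ∇ψ(y)), x - y⟫`. Expanding the
square and using `‖∇ψ(x) - ∇ψ(y)‖ ≤ β ‖x - y‖` with `η β² ≤ μ` gives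
`E ‖(x - y) - η (∇ψ(x) - ∇ψ(y))‖² ≤ (1 - η μ) ‖x - y‖²`. The projection is nonexpansive, and
`E N ≤ (E N² + c²) / (2c)` (AM-GM) with `c = (1 - η μ / 2) ‖x - y‖ ≥ √(1 - η μ) ‖x - y‖`
turns the second-moment bound into the first-moment one.
-/

section Projection

variable {E : Type*} [NormedAddCommGroup E] [InnerProductSpace ℝ E] {W : Set E} {proj : E → E}

theorem inner_sub_proj_sub_proj_nonpos (hW : Convex ℝ W)
    (hproj : ∀ x, proj x ∈ W ∧ ∀ w ∈ W, ‖x - proj x‖ ≤ ‖x - w‖) (u : E) {w : E} (hw : w ∈ W) :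
    ⟪u - proj u, w - proj u⟫ ≤ 0 := by
  have : Nonempty W := ⟨⟨proj u, (hproj u).1⟩⟩
  refine (norm_eq_iInf_iff_real_inner_le_zero hW (hproj u).1).1 ?_ w hw
  have hbdd : BddBelow (Set.range fun w : W => ‖u - w‖) := ⟨0, by rintro _ ⟨w, rfl⟩; positivity⟩
  exact le_antisymm (le_ciInf fun w => (hproj u).2 w w.2) (ciInf_le hbdd ⟨proj u, (hproj u).1⟩)

theorem norm_proj_sub_proj_le (hW : Convex ℝ W)
    (hproj : ∀ x, proj x ∈ W ∧ ∀ w ∈ W, ‖x - proj x‖ ≤ ‖x - w‖) (a b : E) :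
    ‖proj a - proj b‖ ≤ ‖a - b‖ := by
  have ha := inner_sub_proj_sub_proj_nonpos hW hproj a (hproj b).1
  have hb := inner_sub_proj_sub_proj_nonpos hW hproj b (hproj a).1
  have hsq : ‖proj a - proj b‖ ^ 2 ≤ ⟪a - b, proj a - proj b⟫ := by
    rw [← real_inner_self_eq_norm_sq]
    have : ⟪proj a - proj b, proj a - proj b⟫ = ⟪a - b, proj a - proj b⟫
        + ⟪a - proj a, proj b - proj a⟫ + ⟪b - proj b, proj a - proj b⟫ := by
      simp only [inner_sub_left, inner_sub_right]; ring
    linarith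
  nlinarith [real_inner_le_norm (a - b) (proj a - proj b), norm_nonneg (proj a - proj b),
    norm_nonneg (a - b)]

end Projection

section Smooth

variable {E : Type*} [NormedAddCommGroup E] [InnerProductSpace ℝ E] [CompleteSpace E]
  {W : Set E} {f : E → ℝ} {β : ℝ}

theorem abs_sub_sub_inner_gradient_le (hW : Convex ℝ W) (hβ : 0 ≤ β)
    (hf : ∀ x ∈ W, DifferentiableAt ℝ f x)
    (hsmooth : ∀ x ∈ W, ∀ y ∈ W, ‖∇ f x - ∇ f y‖ ≤ β * ‖x - y‖) {a b : E} (ha : a ∈ W)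
    (hb : b ∈ W) : |f b - f a - ⟪∇ f a, b - a⟫| ≤ β * ‖b - a‖ ^ 2 := by
  have hbound : ∀ z ∈ W ∩ Metric.closedBall a ‖b - a‖,
      ‖fderiv ℝ f z - fderiv ℝ f a‖ ≤ β * ‖b - a‖ := by
    rintro z ⟨hzW, hz⟩
    rw [← toDual_gradient, ← toDual_gradient, ← map_sub, LinearIsometryEquiv.norm_map]
    calc ‖∇ f z - ∇ f a‖ ≤ β * ‖z - a‖ := hsmooth z hzW a ha
      _ ≤ β * ‖b - a‖ := by
        rw [Metric.mem_closedBall, dist_eq_norm] at hz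
        gcongr
  have hmvt := (hW.inter (convex_closedBall a ‖b - a‖)).norm_image_sub_le_of_norm_fderiv_le'
    (fun z hz => hf z hz.1) hbound ⟨ha, Metric.mem_closedBall_self (norm_nonneg _)⟩
    ⟨hb, by simp [dist_eq_norm]⟩
  rwa [inner_gradient_left, ← Real.norm_eq_abs, sq, ← mul_assoc]

end Smooth

section StrongConvexity

variable {E : Type*} [NormedAddCommGroup E] [InnerProductSpace ℝ E] {W : Set E} {Φ : E → ℝ}
  {μ : ℝ}

theorem strongConvexOn_of_add_inner_add_le (hW : Convex ℝ W) (g : E → E)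
    (h : ∀ x ∈ W, ∀ y ∈ W, Φ x + ⟪g x, y - x⟫ + μ / 2 * ‖y - x‖ ^ 2 ≤ Φ y) :
    StrongConvexOn W μ Φ := by
  refine ⟨hW, fun x hx y hy a b ha hb hab => ?_⟩
  obtain rfl : a = 1 - b := eq_sub_of_add_eq hab
  set z := (1 - b) • x + b • y
  have hx' := h z (hW hx hy ha hb hab) x hx
  have hy' := h z (hW hx hy ha hb hab) y hy
  have hxz : x - z = b • (x - y) := by simp only [z]; module
  have hyz : y - z = -((1 - b) • (x - y)) := by simp only [z]; module
  rw [hxz, inner_smul_right, norm_smul, Real.norm_of_nonneg hb] at hx'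
  rw [hyz, inner_neg_right, norm_neg, inner_smul_right, norm_smul, Real.norm_of_nonneg ha] at hy'
  simp only [smul_eq_mul]
  linear_combination (1 - b) * hx' + b * hy'

theorem StrongConvexOn.add_inner_add_le (hΦ : StrongConvexOn W μ Φ) {x y : E} (hx : x ∈ W)
    (hy : y ∈ W) {v : E} {C : ℝ}
    (happrox : ∀ b ∈ W, Φ x + ⟪v, b - x⟫ - C * ‖b - x‖ ^ 2 ≤ Φ b) :
    Φ x + ⟪v, y - x⟫ + μ / 2 * ‖y - x‖ ^ 2 ≤ Φ y := by
  suffices ⟪v, y - x⟫ + μ / 2 * ‖y - x‖ ^ 2 ≤ Φ y - Φ x by linarith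
  have hlim : Tendsto (fun t => Φ y - Φ x + t * ((μ / 2 + C) * ‖y - x‖ ^ 2)) (𝓝[>] 0)
      (𝓝 (Φ y - Φ x)) := by
    have := ((tendsto_id (x := 𝓝 (0 : ℝ))).mul_const ((μ / 2 + C) * ‖y - x‖ ^ 2)).const_add
      (Φ y - Φ x)
    simpa using this.mono_left nhdsWithin_le_nhds
  refine ge_of_tendsto hlim ?_
  filter_upwards [Ioc_mem_nhdsGT one_pos] with t ⟨ht0, ht1⟩
  have hconv := hΦ.2 hx hy (sub_nonneg.2 ht1) ht0.le (sub_add_cancel 1 t)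
  have hsupp := happrox _ (hΦ.1 hx hy (sub_nonneg.2 ht1) ht0.le (sub_add_cancel 1 t))
  have hseg : (1 - t) • x + t • y - x = t • (y - x) := by module
  rw [hseg, inner_smul_right, norm_smul, Real.norm_of_nonneg ht0.le] at hsupp
  simp only [smul_eq_mul, norm_sub_rev x y] at hconv
  refine le_of_mul_le_mul_left ?_ ht0
  nlinarith

theorem StrongConvexOn.mul_norm_sq_le_inner_sub (hΦ : StrongConvexOn W μ Φ) {g : E → E} {C : ℝ}
    (happrox : ∀ a ∈ W, ∀ b ∈ W, Φ a + ⟪g a, b - a⟫ - C * ‖b - a‖ ^ 2 ≤ Φ b) {x y : E}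
    (hx : x ∈ W) (hy : y ∈ W) : μ * ‖x - y‖ ^ 2 ≤ ⟪g x - g y, x - y⟫ := by
  have hxy := hΦ.add_inner_add_le hx hy (happrox x hx)
  have hyx := hΦ.add_inner_add_le hy hx (happrox y hy)
  rw [norm_sub_rev y x] at hxy
  have : ⟪g x - g y, x - y⟫ = -⟪g x, y - x⟫ - ⟪g y, x - y⟫ := by
    rw [← inner_neg_right, neg_sub, inner_sub_left]
  linarith

end StrongConvexity

section Measurability

variable {Ω E F : Type*} [MeasurableSpace Ω] {P : Measure Ω} [NormedAddCommGroup E]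
  [NormedAddCommGroup F] [NormedSpace ℝ F] {ψ : Ω → E → F} {w : E}

theorem aestronglyMeasurable_fderiv_apply [NormedSpace ℝ E]
    (hdiff : ∀ ω, DifferentiableAt ℝ (ψ ω) w)
    (hmeas : ∀ v, AEStronglyMeasurable (fun ω => ψ ω v) P) (u : E) :
    AEStronglyMeasurable (fun ω => fderiv ℝ (ψ ω) w u) P := by
  have hseq : Tendsto (fun n : ℕ => (n : ℝ)⁻¹) atTop (𝓝[>] 0) :=
    tendsto_inv_atTop_nhdsGT_zero.comp tendsto_natCast_atTop_atTop
  refine aestronglyMeasurable_of_tendsto_ae atTop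
    (f := fun (n : ℕ) ω => (n : ℝ)⁻¹⁻¹ • (ψ ω (w + (n : ℝ)⁻¹ • u) - ψ ω w))
    (fun n => ((hmeas _).sub (hmeas w)).const_smul _) (ae_of_all _ fun ω => ?_)
  exact ((hdiff ω).hasFDerivAt.hasLineDerivAt u).tendsto_slope_zero_right.comp hseq

theorem aestronglyMeasurable_gradient [InnerProductSpace ℝ E] [FiniteDimensional ℝ E]
    {ψ : Ω → E → ℝ} (hdiff : ∀ ω, DifferentiableAt ℝ (ψ ω) w)
    (hmeas : ∀ v, AEStronglyMeasurable (fun ω => ψ ω v) P) :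
    AEStronglyMeasurable (fun ω => ∇ (ψ ω) w) P := by
  let b := stdOrthonormalBasis ℝ E
  have hexp : (fun ω => ∇ (ψ ω) w) = fun ω => ∑ i, fderiv ℝ (ψ ω) w (b i) • b i := by
    funext ω
    conv_lhs => rw [← b.sum_repr' (∇ (ψ ω) w)]
    simp only [real_inner_comm, inner_gradient_left]
  rw [hexp]
  exact Finset.aestronglyMeasurable_fun_sum _ fun i _ =>
    (aestronglyMeasurable_fderiv_apply hdiff hmeas _).smul_const _

end Measurability

section RandomFunction

variable {Ω E : Type*} [MeasurableSpace Ω] {P : Measure Ω} [IsProbabilityMeasure P]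
  [NormedAddCommGroup E] [InnerProductSpace ℝ E] {W : Set E} {ψ : Ω → E → ℝ}

theorem integral_add_inner_integral_gradient_sub_le [CompleteSpace E] (hW : Convex ℝ W) {β : ℝ}
    (hβ : 0 ≤ β) (hdiff : ∀ ω, ∀ w ∈ W, DifferentiableAt ℝ (ψ ω) w)
    (hsmooth : ∀ ω, ∀ x ∈ W, ∀ y ∈ W, ‖∇ (ψ ω) x - ∇ (ψ ω) y‖ ≤ β * ‖x - y‖)
    (hInt : ∀ w, Integrable (fun ω => ψ ω w) P) {a b : E}
    (hgrad : Integrable (fun ω => ∇ (ψ ω) a) P) (ha : a ∈ W) (hb : b ∈ W) :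
    ∫ ω, ψ ω a ∂P + ⟪∫ ω, ∇ (ψ ω) a ∂P, b - a⟫ - β * ‖b - a‖ ^ 2 ≤ ∫ ω, ψ ω b ∂P := by
  have hinner : Integrable (fun ω => ⟪b - a, ∇ (ψ ω) a⟫) P := hgrad.const_inner _
  have hle : ∫ ω, (ψ ω a + ⟪b - a, ∇ (ψ ω) a⟫ - β * ‖b - a‖ ^ 2) ∂P ≤ ∫ ω, ψ ω b ∂P := by
    refine integral_mono (((hInt a).fun_add hinner).sub (integrable_const _)) (hInt b) fun ω => ?_
    have htaylor := abs_le.1 (abs_sub_sub_inner_gradient_le hW hβ (hdiff ω) (hsmooth ω) ha hb)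
    rw [real_inner_comm]
    linarith [htaylor.1]
  rwa [integral_sub ((hInt a).fun_add hinner) (integrable_const _), integral_add (hInt a) hinner,
    integral_inner hgrad, integral_const, probReal_univ, one_smul, real_inner_comm] at hle

theorem mul_norm_sq_le_inner_integral_gradient_sub [FiniteDimensional ℝ E] (hW : Convex ℝ W)
    {G β μ : ℝ} (hβ : 0 ≤ β)
    (hdiff : ∀ ω, ∀ w ∈ W, DifferentiableAt ℝ (ψ ω) w)
    (hLip : ∀ ω, ∀ w ∈ W, ‖∇ (ψ ω) w‖ ≤ G)
    (hsmooth : ∀ ω, ∀ x ∈ W, ∀ y ∈ W, ‖∇ (ψ ω) x - ∇ (ψ ω) y‖ ≤ β * ‖x - y‖)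
    (hInt : ∀ w, Integrable (fun ω => ψ ω w) P)
    (hstrong : ∀ x ∈ W, ∀ y ∈ W, ∫ ω, ψ ω x ∂P + ⟪∇ (fun w => ∫ ω, ψ ω w ∂P) x, y - x⟫
      + μ / 2 * ‖y - x‖ ^ 2 ≤ ∫ ω, ψ ω y ∂P)
    {x y : E} (hx : x ∈ W) (hy : y ∈ W) :
    μ * ‖x - y‖ ^ 2 ≤ ⟪∫ ω, (∇ (ψ ω) x - ∇ (ψ ω) y) ∂P, x - y⟫ := by
  have hgrad : ∀ w ∈ W, Integrable (fun ω => ∇ (ψ ω) w) P := fun w hw =>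
    .of_bound (aestronglyMeasurable_gradient (fun ω => hdiff ω w hw) fun v => (hInt v).1) G
      (ae_of_all _ fun ω => hLip ω w hw)
  have hΨ := strongConvexOn_of_add_inner_add_le hW _ hstrong
  rw [integral_sub (hgrad x hx) (hgrad y hy)]
  exact hΨ.mul_norm_sq_le_inner_sub (g := fun w => ∫ ω, ∇ (ψ ω) w ∂P) (fun a ha b hb =>
    integral_add_inner_integral_gradient_sub_le hW hβ hdiff hsmooth hInt (hgrad a ha) ha hb) hx hy

end RandomFunction

section SecondMoment

variable {Ω E : Type*} [MeasurableSpace Ω] {P : Measure Ω} [NormedAddCommGroup E]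
  [InnerProductSpace ℝ E]

theorem integrable_norm_sub_smul_sq [IsFiniteMeasure P] {V : Ω → E}
    (hV : AEStronglyMeasurable V P) {C : ℝ} (hbound : ∀ ω, ‖V ω‖ ≤ C) (z : E) (η : ℝ) :
    Integrable (fun ω => ‖z - η • V ω‖ ^ 2) P := by
  refine .of_bound ((aestronglyMeasurable_const.sub (hV.const_smul η)).norm.pow 2)
    ((‖z‖ + |η| * C) ^ 2) (ae_of_all _ fun ω => ?_)
  rw [norm_pow, norm_norm]
  gcongr
  calc ‖z - η • V ω‖ ≤ ‖z‖ + |η| * ‖V ω‖ := by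
        simpa [norm_smul] using norm_sub_le z (η • V ω)
    _ ≤ ‖z‖ + |η| * C := by gcongr; exact hbound ω

theorem integral_norm_sub_smul_sq_le [IsProbabilityMeasure P] [CompleteSpace E] {V : Ω → E}
    (hV : AEStronglyMeasurable V P) {z : E} {β μ η : ℝ} (hbound : ∀ ω, ‖V ω‖ ≤ β * ‖z‖)
    (hmono : μ * ‖z‖ ^ 2 ≤ ⟪∫ ω, V ω ∂P, z⟫) (hη0 : 0 ≤ η) (hη : η * β ^ 2 ≤ μ) :
    ∫ ω, ‖z - η • V ω‖ ^ 2 ∂P ≤ (1 - η * μ) * ‖z‖ ^ 2 := by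
  have hVint : Integrable V P := .of_bound hV _ (ae_of_all _ hbound)
  have hinner : Integrable (fun ω => 2 * η * ⟪z, V ω⟫) P := (hVint.const_inner z).const_mul _
  have hpt : ∀ ω, ‖z - η • V ω‖ ^ 2 ≤ (1 + η ^ 2 * β ^ 2) * ‖z‖ ^ 2 - 2 * η * ⟪z, V ω⟫ := by
    intro ω
    rw [norm_sub_sq_real, inner_smul_right, norm_smul, Real.norm_of_nonneg hη0]
    have := pow_le_pow_left₀ (norm_nonneg _) (hbound ω) 2
    nlinarith [sq_nonneg η]
  calc ∫ ω, ‖z - η • V ω‖ ^ 2 ∂P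
      ≤ ∫ ω, ((1 + η ^ 2 * β ^ 2) * ‖z‖ ^ 2 - 2 * η * ⟪z, V ω⟫) ∂P :=
        integral_mono_of_nonneg (ae_of_all _ fun ω => by positivity)
          ((integrable_const _).sub hinner) (ae_of_all _ hpt)
    _ = (1 + η ^ 2 * β ^ 2) * ‖z‖ ^ 2 - 2 * η * ⟪∫ ω, V ω ∂P, z⟫ := by
        rw [integral_sub (integrable_const _) hinner, integral_const, probReal_univ, one_smul,
          integral_const_mul, integral_inner hVint, real_inner_comm]
    _ ≤ (1 - η * μ) * ‖z‖ ^ 2 := by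
        nlinarith [mul_le_mul_of_nonneg_left hη hη0, mul_le_mul_of_nonneg_left hmono hη0,
          sq_nonneg ‖z‖]

theorem integral_le_of_le_of_integral_sq_le [IsProbabilityMeasure P] {f g : Ω → ℝ}
    (hf : Integrable f P) (hg : Integrable (fun ω => g ω ^ 2) P) (hfg : ∀ ω, f ω ≤ g ω)
    {c : ℝ} (hc : 0 < c) (h : ∫ ω, g ω ^ 2 ∂P ≤ c ^ 2) : ∫ ω, f ω ∂P ≤ c := by
  have hamgm : ∀ ω, f ω ≤ (2 * c)⁻¹ * g ω ^ 2 + c / 2 := by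
    intro ω
    have hsq : (2 * c)⁻¹ * g ω ^ 2 + c / 2 - g ω = (2 * c)⁻¹ * (g ω - c) ^ 2 := by
      field_simp; ring
    calc f ω ≤ g ω := hfg ω
      _ ≤ (2 * c)⁻¹ * g ω ^ 2 + c / 2 := by rw [← sub_nonneg, hsq]; positivity
  calc ∫ ω, f ω ∂P ≤ ∫ ω, ((2 * c)⁻¹ * g ω ^ 2 + c / 2) ∂P :=
        integral_mono hf ((hg.const_mul _).add (integrable_const _)) hamgm
    _ = (2 * c)⁻¹ * ∫ ω, g ω ^ 2 ∂P + c / 2 := by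
        rw [integral_add (hg.const_mul _) (integrable_const _), integral_const_mul, integral_const,
          probReal_univ, one_smul]
    _ ≤ (2 * c)⁻¹ * c ^ 2 + c / 2 := by gcongr
    _ = c := by field_simp; ring

end SecondMoment

theorem expected_contraction_of_gradient_step_general
    {d : ℕ} {Ω : Type*} [MeasurableSpace Ω] (P : Measure Ω) [IsProbabilityMeasure P]
    (W : Set (EuclideanSpace ℝ (Fin d))) (hWconv : Convex ℝ W)
    -- `proj` is the Euclidean orthogonal projection onto `W`
    (proj : EuclideanSpace ℝ (Fin d) → EuclideanSpace ℝ (Fin d))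
    (hproj : ∀ x, proj x ∈ W ∧ ∀ w ∈ W, ‖x - proj x‖ ≤ ‖x - w‖)
    -- the random function `ψ`
    (ψ : Ω → EuclideanSpace ℝ (Fin d) → ℝ)
    (G β μ η : ℝ) (hβ : 0 < β)
    (hη0 : 0 ≤ η) (hη : η ≤ μ / β ^ 2)
    (hdiff : ∀ ω, Differentiable ℝ (ψ ω))
    -- every `ψ` in the support is `G`-Lipschitz on `W`
    (hLip : ∀ ω, ∀ w ∈ W, ‖gradient (ψ ω) w‖ ≤ G)
    -- every `ψ` in the support is `β`-smooth on `W`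
    (hsmooth : ∀ ω, ∀ x ∈ W, ∀ y ∈ W,
      ‖gradient (ψ ω) x - gradient (ψ ω) y‖ ≤ β * ‖x - y‖)
    (hInt : ∀ w : EuclideanSpace ℝ (Fin d), Integrable (fun ω => ψ ω w) P)
    -- the expected function `Ψ(w) = E ψ(w)` is `μ`-strongly convex on `W`
    (hstrong : ∀ x ∈ W, ∀ y ∈ W,
      (∫ ω, ψ ω x ∂P) + (inner ℝ (gradient (fun w => ∫ ω, ψ ω w ∂P) x) (y - x) : ℝ)
        + μ / 2 * ‖y - x‖ ^ 2 ≤ ∫ ω, ψ ω y ∂P)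
    (x y : EuclideanSpace ℝ (Fin d)) (hx : x ∈ W) (hy : y ∈ W)
    (hIntStep : Integrable
      (fun ω => ‖proj (x - η • gradient (ψ ω) x) - proj (y - η • gradient (ψ ω) y)‖) P) :
    ∫ ω, ‖proj (x - η • gradient (ψ ω) x) - proj (y - η • gradient (ψ ω) y)‖ ∂P
      ≤ (1 - η * μ / 2) * ‖x - y‖ := by
  rcases eq_or_ne x y with rfl | hxy
  · simp
  set V := fun ω => ∇ (ψ ω) x - ∇ (ψ ω) y
  have hV : AEStronglyMeasurable V P :=
    (aestronglyMeasurable_gradient (fun ω => hdiff ω x) fun v => (hInt v).1).sub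
      (aestronglyMeasurable_gradient (fun ω => hdiff ω y) fun v => (hInt v).1)
  have hVbound : ∀ ω, ‖V ω‖ ≤ β * ‖x - y‖ := fun ω => hsmooth ω x hx y hy
  have hmono := mul_norm_sq_le_inner_integral_gradient_sub hWconv hβ.le
    (fun ω w _ => hdiff ω w) hLip hsmooth hInt hstrong hx hy
  have hstep := integral_norm_sub_smul_sq_le hV hVbound hmono hη0
    ((le_div_iff₀ (by positivity)).1 hη)
  have hxy' : 0 < ‖x - y‖ := norm_pos_iff.2 (sub_ne_zero.2 hxy)
  have hημ : η * μ ≤ 1 := by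
    have := (integral_nonneg fun ω => sq_nonneg ‖(x - y) - η • V ω‖).trans hstep
    nlinarith [pow_pos hxy' 2]
  refine integral_le_of_le_of_integral_sq_le hIntStep
    (integrable_norm_sub_smul_sq hV hVbound (x - y) η) (fun ω => ?_) (by nlinarith)
    (hstep.trans (by nlinarith [sq_nonneg (η * μ * ‖x - y‖)]))
  calc _ ≤ ‖(x - η • ∇ (ψ ω) x) - (y - η • ∇ (ψ ω) y)‖ := norm_proj_sub_proj_le hWconv hproj _ _
    _ = ‖(x - y) - η • V ω‖ := by congr 1; simp only [V, smul_sub]; abel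

/-- A projected gradient step on a random function drawn from a
distribution whose expectation is strongly convex is contractive in expectation
(Lemma 3.4 of the paper). -/
theorem expected_contraction_of_gradient_step
    {d : ℕ} {Ω : Type*} [MeasurableSpace Ω] (P : Measure Ω) [IsProbabilityMeasure P]
    (W : Set (EuclideanSpace ℝ (Fin d))) (hWconv : Convex ℝ W) (hWclosed : IsClosed W)
    -- `proj` is the Euclidean orthogonal projection onto `W`
    (proj : EuclideanSpace ℝ (Fin d) → EuclideanSpace ℝ (Fin d))
    (hproj : ∀ x, proj x ∈ W ∧ ∀ w ∈ W, ‖x - proj x‖ ≤ ‖x - w‖)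
    -- the random function `ψ`
    (ψ : Ω → EuclideanSpace ℝ (Fin d) → ℝ)
    (G β μ η : ℝ) (hG : 0 < G) (hβ : 0 < β) (hμ : 0 < μ)
    (hη0 : 0 ≤ η) (hη : η ≤ μ / β ^ 2)
    (hdiff : ∀ ω, Differentiable ℝ (ψ ω))
    -- every `ψ` in the support is `G`-Lipschitz on `W`
    (hLip : ∀ ω, ∀ w ∈ W, ‖gradient (ψ ω) w‖ ≤ G)
    -- every `ψ` in the support is `β`-smooth on `W`
    (hsmooth : ∀ ω, ∀ x ∈ W, ∀ y ∈ W,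
      ‖gradient (ψ ω) x - gradient (ψ ω) y‖ ≤ β * ‖x - y‖)
    (hInt : ∀ w : EuclideanSpace ℝ (Fin d), Integrable (fun ω => ψ ω w) P)
    -- the expected function `Ψ(w) = E ψ(w)` is `μ`-strongly convex on `W`
    (hstrong : ∀ x ∈ W, ∀ y ∈ W,
      (∫ ω, ψ ω x ∂P) + (inner ℝ (gradient (fun w => ∫ ω, ψ ω w ∂P) x) (y - x) : ℝ)
        + μ / 2 * ‖y - x‖ ^ 2 ≤ ∫ ω, ψ ω y ∂P)
    (x y : EuclideanSpace ℝ (Fin d)) (hx : x ∈ W) (hy : y ∈ W)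
    (hIntStep : Integrable
      (fun ω => ‖proj (x - η • gradient (ψ ω) x) - proj (y - η • gradient (ψ ω) y)‖) P) :
    ∫ ω, ‖proj (x - η • gradient (ψ ω) x) - proj (y - η • gradient (ψ ω) y)‖ ∂P
      ≤ (1 - η * μ / 2) * ‖x - y‖ :=
  expected_contraction_of_gradient_step_general P W hWconv proj hproj ψ G β μ η hβ hη0 hη hdiff hLip
    hsmooth hInt hstrong x y hx hy hIntStep
end

section
/- Let Z be a finite set of T distinct datapoints and W ⊆ ℝ^d. Suppose a (possibly randomized) learning algorithm A: Z* × 𝒳 → W is on-average-oos stable with rate ε(m), i.e., for every i ≤ m, E_{S, z̃_i ∼ 𝒵(m,1), ξ∼𝒳} ‖A(S; ξ) − A(S^{(i)}; ξ)‖ ≤ ε(m). Then for any loss ℓ: W × Z → ℝ that is L-Lipschitz in its first argument, | E_{S, z̃ ∼ 𝒵(m,1), z ∼ 𝒵}[ ℓ(A(S); z̃) − ℓ(A(S); z) ] | ≤ (L m / T) ε(m). -/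
open MeasureTheory Finset

private lemma slaux_swap_lt {T m : ℕ} (hm : m < T) (σ : Equiv.Perm (Fin T)) (k : Fin T)
    (hk : (k : ℕ) < m) :
    (List.ofFn fun j : Fin m => (σ * Equiv.swap k ⟨m, hm⟩) (Fin.castLE hm.le j))
      = (List.ofFn fun j : Fin m => σ (Fin.castLE hm.le j)).set (k : ℕ) (σ ⟨m, hm⟩) := by
  apply List.ext_getElem
  · simp
  · intro i h1 h2
    have him : i < m := by simpa using h1
    simp only [List.getElem_ofFn, List.getElem_set]
    by_cases hik : (k : ℕ) = i
    · have hc : Fin.castLE hm.le ⟨i, him⟩ = k := by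
        apply Fin.ext; simp [← hik]
      rw [if_pos hik]
      show (σ * Equiv.swap k ⟨m, hm⟩) (Fin.castLE hm.le ⟨i, him⟩) = σ ⟨m, hm⟩
      rw [hc, Equiv.Perm.mul_apply, Equiv.swap_apply_left]
    · rw [if_neg hik]
      have h1' : Fin.castLE hm.le ⟨i, him⟩ ≠ k := by
        intro hcon
        exact hik (by simpa using congrArg Fin.val hcon.symm)
      have h2' : Fin.castLE hm.le ⟨i, him⟩ ≠ (⟨m, hm⟩ : Fin T) := by
        intro hcon
        have := congrArg Fin.val hcon
        simp at this
        omega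
      show (σ * Equiv.swap k ⟨m, hm⟩) (Fin.castLE hm.le ⟨i, him⟩)
          = σ (Fin.castLE hm.le ⟨i, him⟩)
      rw [Equiv.Perm.mul_apply, Equiv.swap_apply_of_ne_of_ne h1' h2']

private lemma slaux_swap_ge {T m : ℕ} (hm : m < T) (σ : Equiv.Perm (Fin T)) (k : Fin T)
    (hk : m ≤ (k : ℕ)) :
    (List.ofFn fun j : Fin m => (σ * Equiv.swap k ⟨m, hm⟩) (Fin.castLE hm.le j))
      = (List.ofFn fun j : Fin m => σ (Fin.castLE hm.le j)) := by
  congr 1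
  funext j
  have h1' : Fin.castLE hm.le j ≠ k := by
    intro hcon
    have := congrArg Fin.val hcon
    simp at this
    omega
  have h2' : Fin.castLE hm.le j ≠ (⟨m, hm⟩ : Fin T) := by
    intro hcon
    have := congrArg Fin.val hcon
    simp at this
    omega
  rw [Equiv.Perm.mul_apply, Equiv.swap_apply_of_ne_of_ne h1' h2']

/-- On-average out-of-sample stability implies a bound on the gap
between out-of-sample and population loss (Lemma 3.1 of the paper, first claim).
Datapoints are labelled by `Fin T`; `S = (σ 0, …, σ (m-1))` and `z̃ = σ m` for a
uniformly random permutation `σ`; `S⁽ⁱ⁾` is `S` with its `i`-th entry replaced by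
`z̃`.  The randomized algorithm `A` takes a datapoint sequence and a random seed
`ξ ∼ P`, and the same seed is used on both `S` and `S⁽ⁱ⁾` in the stability bound. -/
theorem stability_implies_oos_population_gap
    {d : ℕ} {Ω : Type*} [MeasurableSpace Ω] (P : Measure Ω) [IsProbabilityMeasure P]
    (T m : ℕ) (hm : m < T) (hm1 : 1 ≤ m)
    (W : Set (EuclideanSpace ℝ (Fin d)))
    (A : List (Fin T) → Ω → EuclideanSpace ℝ (Fin d))
    (hAW : ∀ S ξ, A S ξ ∈ W)
    (hAint : ∀ S : List (Fin T), Integrable (fun ξ => A S ξ) P)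
    (ℓ : EuclideanSpace ℝ (Fin d) → Fin T → ℝ)
    (L : ℝ) (hL : 0 ≤ L)
    -- `ℓ` is `L`-Lipschitz in its first argument on `W`
    (hLip : ∀ z : Fin T, ∀ x ∈ W, ∀ y ∈ W, |ℓ x z - ℓ y z| ≤ L * ‖x - y‖)
    (ε : ℝ)
    -- on-average-oos stability with rate `ε = ε(m)`
    (hstab : ∀ i : Fin m,
      (∑ σ : Equiv.Perm (Fin T),
          ∫ ξ, ‖A (List.ofFn fun j : Fin m => σ (Fin.castLE hm.le j)) ξ
              - A ((List.ofFn fun j : Fin m => σ (Fin.castLE hm.le j)).set (i : ℕ) (σ ⟨m, hm⟩)) ξ‖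
            ∂P)
        / (Nat.factorial T : ℝ) ≤ ε) :
    |(∑ σ : Equiv.Perm (Fin T),
        ∫ ξ, (ℓ (A (List.ofFn fun j : Fin m => σ (Fin.castLE hm.le j)) ξ) (σ ⟨m, hm⟩)
          - (1 / T : ℝ) * ∑ z : Fin T,
              ℓ (A (List.ofFn fun j : Fin m => σ (Fin.castLE hm.le j)) ξ) z) ∂P)
      / (Nat.factorial T : ℝ)|
    ≤ L * m * ε / T := by
  classical
  have hT : 0 < T := lt_of_le_of_lt (Nat.zero_le m) hm
  have hT' : (0 : ℝ) < T := by exact_mod_cast hT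
  have hfac : (0 : ℝ) < (Nat.factorial T : ℝ) := by exact_mod_cast Nat.factorial_pos T
  set m' : Fin T := (⟨m, hm⟩ : Fin T) with hm'def
  set Sl : Equiv.Perm (Fin T) → List (Fin T) :=
    fun σ => List.ofFn fun j : Fin m => σ (Fin.castLE hm.le j) with hSl
  -- restated stability
  have hstab' : ∀ i : Fin m,
      (∑ σ : Equiv.Perm (Fin T),
          ∫ ξ, ‖A (Sl σ) ξ - A ((Sl σ).set (i : ℕ) (σ m')) ξ‖ ∂P)
        ≤ ε * (Nat.factorial T : ℝ) := by
    intro i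
    have := hstab i
    rw [div_le_iff₀ hfac] at this
    exact this
  have hε : 0 ≤ ε := by
    have h0 := hstab' ⟨0, hm1⟩
    have hnn : (0 : ℝ) ≤ ∑ σ : Equiv.Perm (Fin T),
        ∫ ξ, ‖A (Sl σ) ξ - A ((Sl σ).set ((⟨0, hm1⟩ : Fin m) : ℕ) (σ m')) ξ‖ ∂P :=
      Finset.sum_nonneg fun σ _ => integral_nonneg fun ξ => norm_nonneg _
    nlinarith
  -- integrability of the loss composed with the algorithm
  have hint : ∀ (l : List (Fin T)) (z : Fin T),
      Integrable (fun ξ => ℓ (A l ξ) z) P := by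
    intro l z
    have hlip : LipschitzOnWith (Real.toNNReal L) (fun x => ℓ x z) W := by
      rw [lipschitzOnWith_iff_dist_le_mul]
      intro x hx y hy
      rw [Real.dist_eq, dist_eq_norm, Real.coe_toNNReal _ hL]
      exact hLip z x hx y hy
    obtain ⟨g, hg, hgeq⟩ := hlip.extend_real
    have heq : (fun ξ => ℓ (A l ξ) z) = fun ξ => g (A l ξ) := by
      funext ξ; exact hgeq (hAW l ξ)
    rw [heq]
    have hmeas : AEStronglyMeasurable (fun ξ => g (A l ξ)) P :=
      hg.continuous.comp_aestronglyMeasurable (hAint l).aestronglyMeasurable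
    refine (((hAint l).norm.const_mul L).add (integrable_const (|g 0|))).mono' hmeas ?_
    filter_upwards with ξ
    have h1 : dist (g (A l ξ)) (g 0) ≤ L * dist (A l ξ) 0 := by
      have := hg.dist_le_mul (A l ξ) 0
      rwa [Real.coe_toNNReal _ hL] at this
    rw [Real.dist_eq, dist_eq_norm, sub_zero] at h1
    rw [Real.norm_eq_abs]
    show |g (A l ξ)| ≤ L * ‖A l ξ‖ + |g 0|
    have h2 : |g (A l ξ)| ≤ |g (A l ξ) - g 0| + |g 0| := by
      calc |g (A l ξ)| = |(g (A l ξ) - g 0) + g 0| := by ring_nf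
        _ ≤ |g (A l ξ) - g 0| + |g 0| := abs_add_le _ _
    linarith
  -- expected losses
  set J : Equiv.Perm (Fin T) → Fin T → ℝ :=
    fun σ z => ∫ ξ, ℓ (A (Sl σ) ξ) z ∂P with hJ
  -- split the integral
  have hsplit : ∀ σ : Equiv.Perm (Fin T),
      (∫ ξ, (ℓ (A (Sl σ) ξ) (σ m')
          - (1 / T : ℝ) * ∑ z : Fin T, ℓ (A (Sl σ) ξ) z) ∂P)
        = J σ (σ m') - (1 / T : ℝ) * ∑ k : Fin T, J σ (σ k) := by
    intro σ
    have h1 : Integrable (fun ξ => (1 / T : ℝ) * ∑ z : Fin T, ℓ (A (Sl σ) ξ) z) P := by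
      exact (integrable_finset_sum univ fun z _ => hint (Sl σ) z).const_mul _
    rw [integral_sub (hint _ _) h1, integral_const_mul,
      integral_finset_sum univ fun z _ => hint (Sl σ) z]
    rw [← Equiv.sum_comp σ (fun z => ∫ ξ, ℓ (A (Sl σ) ξ) z ∂P)]
  -- rearrange the sum
  have hE : (∑ σ : Equiv.Perm (Fin T),
        (J σ (σ m') - (1 / T : ℝ) * ∑ k : Fin T, J σ (σ k)))
      = (1 / T : ℝ) * ∑ k : Fin T,
          ((∑ σ : Equiv.Perm (Fin T), J σ (σ m'))
            - ∑ σ : Equiv.Perm (Fin T), J σ (σ k)) := by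
    rw [Finset.sum_sub_distrib, Finset.sum_sub_distrib, Finset.sum_const,
      Finset.card_univ, Fintype.card_fin, nsmul_eq_mul, mul_sub, ← mul_assoc,
      one_div, inv_mul_cancel₀ (ne_of_gt hT'), one_mul, ← Finset.mul_sum]
    congr 1
    rw [Finset.sum_comm]
  -- reindexing by right multiplication with a swap
  have hswap : ∀ k : Fin T,
      (∑ σ : Equiv.Perm (Fin T), J σ (σ k))
        = ∑ σ : Equiv.Perm (Fin T),
            ∫ ξ, ℓ (A (Sl (σ * Equiv.swap k m')) ξ) (σ m') ∂P := by
    intro k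
    rw [← Equiv.sum_comp (Equiv.mulRight (Equiv.swap k m')) (fun σ => J σ (σ k))]
    refine Finset.sum_congr rfl fun σ _ => ?_
    have hk : (Equiv.mulRight (Equiv.swap k m') σ) k = σ m' := by
      simp [Equiv.Perm.mul_apply]
    rw [hJ]
    simp only [Equiv.coe_mulRight] at hk ⊢
    rw [hk]
  -- vanishing terms
  have hzero : ∀ k : Fin T, m ≤ (k : ℕ) →
      (∑ σ : Equiv.Perm (Fin T), J σ (σ k))
        = ∑ σ : Equiv.Perm (Fin T), J σ (σ m') := by
    intro k hk
    rw [hswap k]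
    refine Finset.sum_congr rfl fun σ _ => ?_
    rw [hJ]
    have : Sl (σ * Equiv.swap k m') = Sl σ := slaux_swap_ge hm σ k hk
    rw [this]
  -- bounded terms
  have hbound : ∀ k : Fin T, (k : ℕ) < m →
      |(∑ σ : Equiv.Perm (Fin T), J σ (σ m'))
        - ∑ σ : Equiv.Perm (Fin T), J σ (σ k)|
        ≤ L * (ε * (Nat.factorial T : ℝ)) := by
    intro k hk
    rw [hswap k]
    have hlist : ∀ σ : Equiv.Perm (Fin T),
        Sl (σ * Equiv.swap k m') = (Sl σ).set (k : ℕ) (σ m') :=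
      fun σ => slaux_swap_lt hm σ k hk
    calc |(∑ σ : Equiv.Perm (Fin T), J σ (σ m'))
        - ∑ σ : Equiv.Perm (Fin T),
            ∫ ξ, ℓ (A (Sl (σ * Equiv.swap k m')) ξ) (σ m') ∂P|
        = |∑ σ : Equiv.Perm (Fin T),
            (J σ (σ m') - ∫ ξ, ℓ (A ((Sl σ).set (k : ℕ) (σ m')) ξ) (σ m') ∂P)| := by
          rw [Finset.sum_sub_distrib]
          congr 2
          exact Finset.sum_congr rfl fun σ _ => by rw [hlist σ]
      _ ≤ ∑ σ : Equiv.Perm (Fin T),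
            |J σ (σ m') - ∫ ξ, ℓ (A ((Sl σ).set (k : ℕ) (σ m')) ξ) (σ m') ∂P| :=
          Finset.abs_sum_le_sum_abs _ _
      _ ≤ ∑ σ : Equiv.Perm (Fin T),
            L * ∫ ξ, ‖A (Sl σ) ξ - A ((Sl σ).set (k : ℕ) (σ m')) ξ‖ ∂P := by
          refine Finset.sum_le_sum fun σ _ => ?_
          rw [hJ]
          rw [← integral_sub (hint _ _) (hint _ _)]
          have h1 : |∫ ξ, (ℓ (A (Sl σ) ξ) (σ m')
                - ℓ (A ((Sl σ).set (k : ℕ) (σ m')) ξ) (σ m')) ∂P|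
              ≤ ∫ ξ, |ℓ (A (Sl σ) ξ) (σ m')
                - ℓ (A ((Sl σ).set (k : ℕ) (σ m')) ξ) (σ m')| ∂P := by
            have := norm_integral_le_integral_norm
              (fun ξ => ℓ (A (Sl σ) ξ) (σ m')
                - ℓ (A ((Sl σ).set (k : ℕ) (σ m')) ξ) (σ m')) (μ := P)
            simpa [Real.norm_eq_abs] using this
          refine h1.trans ?_
          rw [← integral_const_mul]
          refine integral_mono ?_ ?_ ?_
          · exact ((hint _ _).sub (hint _ _)).abs
          · exact (((hAint _).sub (hAint _)).norm.const_mul L)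
          · intro ξ
            exact hLip (σ m') _ (hAW _ ξ) _ (hAW _ ξ)
      _ = L * ∑ σ : Equiv.Perm (Fin T),
            ∫ ξ, ‖A (Sl σ) ξ - A ((Sl σ).set (k : ℕ) (σ m')) ξ‖ ∂P := by
          rw [Finset.mul_sum]
      _ ≤ L * (ε * (Nat.factorial T : ℝ)) := by
          refine mul_le_mul_of_nonneg_left ?_ hL
          have := hstab' ⟨(k : ℕ), hk⟩
          simpa using this
  -- sum the bounds over k
  have hsum : ∑ k : Fin T,
      |(∑ σ : Equiv.Perm (Fin T), J σ (σ m'))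
        - ∑ σ : Equiv.Perm (Fin T), J σ (σ k)|
      ≤ (m : ℝ) * (L * (ε * (Nat.factorial T : ℝ))) := by
    have hle : ∀ k : Fin T,
        |(∑ σ : Equiv.Perm (Fin T), J σ (σ m'))
          - ∑ σ : Equiv.Perm (Fin T), J σ (σ k)|
        ≤ (fun i : ℕ => if i < m then L * (ε * (Nat.factorial T : ℝ)) else 0) (k : ℕ) := by
      intro k
      by_cases hk : (k : ℕ) < m
      · simpa [hk] using hbound k hk
      · simp only [hk, if_false]
        rw [hzero k (le_of_not_gt hk), sub_self, abs_zero]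
    refine le_trans (Finset.sum_le_sum fun k _ => hle k) ?_
    rw [Fin.sum_univ_eq_sum_range
      (fun i : ℕ => if i < m then L * (ε * (Nat.factorial T : ℝ)) else 0) T]
    rw [← Finset.sum_range_add_sum_Ico _ hm.le]
    have h2 : ∑ i ∈ Finset.Ico m T,
        (if i < m then L * (ε * (Nat.factorial T : ℝ)) else 0) = 0 := by
      refine Finset.sum_eq_zero fun i hi => ?_
      rw [Finset.mem_Ico] at hi
      simp [Nat.not_lt.mpr hi.1]
    have h1 : ∑ i ∈ Finset.range m,
        (if i < m then L * (ε * (Nat.factorial T : ℝ)) else 0)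
        = (m : ℝ) * (L * (ε * (Nat.factorial T : ℝ))) := by
      rw [Finset.sum_congr rfl fun i hi => if_pos (Finset.mem_range.mp hi)]
      rw [Finset.sum_const, Finset.card_range, nsmul_eq_mul]
    rw [h1, h2, add_zero]
  -- put everything together
  show |(∑ σ : Equiv.Perm (Fin T),
        ∫ ξ, (ℓ (A (Sl σ) ξ) (σ m')
          - (1 / T : ℝ) * ∑ z : Fin T, ℓ (A (Sl σ) ξ) z) ∂P)
      / (Nat.factorial T : ℝ)| ≤ L * m * ε / T
  rw [Finset.sum_congr rfl fun σ _ => hsplit σ, hE]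
  rw [abs_div, abs_of_pos hfac, div_le_iff₀ hfac, abs_mul, abs_of_pos (by positivity : (0:ℝ) < (1/T:ℝ))]
  calc (1 / T : ℝ) * |∑ k : Fin T,
        ((∑ σ : Equiv.Perm (Fin T), J σ (σ m'))
          - ∑ σ : Equiv.Perm (Fin T), J σ (σ k))|
      ≤ (1 / T : ℝ) * ((m : ℝ) * (L * (ε * (Nat.factorial T : ℝ)))) := by
        refine mul_le_mul_of_nonneg_left ?_ (by positivity)
        exact le_trans (Finset.abs_sum_le_sum_abs _ _) hsum
    _ = L * m * ε / T * (Nat.factorial T : ℝ) := by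
        field_simp
end

section
/- Let Z be a finite set of T distinct datapoints, W ⊆ ℝ^d, and f: W × Z → ℝ a loss with ‖∇f(w; z)‖ ≤ G for all w ∈ W, z ∈ Z; let F(w) := (1/T)∑_{z∈Z} f(w; z). Suppose an online algorithm A producing iterates w_t (where w_t depends only on z_1,…,z_{t−1} and A's random seed) is on-average-oos stable with rate ε(m). Then for a random order sequence z_1,…,z_t ∼ 𝒵(t), E[ f(w_t; z_t) − F(w_t) ] ≤ (G (t−1) / T) · ε(t−1). -/
open MeasureTheory

theorem key_stability_lemma
    {d : ℕ} {Ω : Type*} [MeasurableSpace Ω] (P : Measure Ω) [IsProbabilityMeasure P]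
    (T m : ℕ) (hm : m < T)
    (W : Set (EuclideanSpace ℝ (Fin d))) (hWconv : Convex ℝ W)
    (f : EuclideanSpace ℝ (Fin d) → Fin T → ℝ)
    (G : ℝ) (hG : 0 ≤ G)
    (hdiff : ∀ z, Differentiable ℝ (fun w => f w z))
    (hLip : ∀ z : Fin T, ∀ w ∈ W, ‖gradient (fun u => f u z) w‖ ≤ G)
    (A : List (Fin T) → Ω → EuclideanSpace ℝ (Fin d))
    (hAW : ∀ S ξ, A S ξ ∈ W)
    (hAint : ∀ S : List (Fin T), Integrable (fun ξ => A S ξ) P)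
    (ε : ℕ → ℝ)
    (hstab : ∀ i : Fin m,
      (∑ σ : Equiv.Perm (Fin T),
          ∫ ξ, ‖A (List.ofFn fun j : Fin m => σ (Fin.castLE hm.le j)) ξ
              - A ((List.ofFn fun j : Fin m => σ (Fin.castLE hm.le j)).set (i : ℕ) (σ ⟨m, hm⟩)) ξ‖
            ∂P)
        / (Nat.factorial T : ℝ) ≤ ε m) :
    (∑ σ : Equiv.Perm (Fin T),
        ∫ ξ, (f (A (List.ofFn fun j : Fin m => σ (Fin.castLE hm.le j)) ξ)
                (σ ⟨m, hm⟩)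
          - (1 / T : ℝ) * ∑ z : Fin T,
              f (A (List.ofFn fun j : Fin m => σ (Fin.castLE hm.le j)) ξ) z) ∂P)
      / (Nat.factorial T : ℝ)
    ≤ G * (m : ℝ) / T * ε m := by
  classical
  have hT : 0 < T := by omega
  have hTf : (0:ℝ) < (Nat.factorial T : ℝ) := by exact_mod_cast Nat.factorial_pos T
  have hTR : (0:ℝ) < (T:ℝ) := by exact_mod_cast hT
  obtain ⟨ξ0⟩ : Nonempty Ω := by
    by_contra h
    rw [not_nonempty_iff] at h
    have h1 : P Set.univ = 1 := measure_univ
    rw [Set.univ_eq_empty_iff.mpr h, measure_empty] at h1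
    exact zero_ne_one h1
  -- Lipschitz estimate
  have hlipn : ∀ (z : Fin T) (w1 w2 : EuclideanSpace ℝ (Fin d)), w1 ∈ W → w2 ∈ W →
      |f w1 z - f w2 z| ≤ G * ‖w1 - w2‖ := by
    intro z w1 w2 h1 h2
    have hfd : ∀ x ∈ W, ‖fderiv ℝ (fun u => f u z) x‖ ≤ G := by
      intro x hx
      have e : ‖fderiv ℝ (fun u => f u z) x‖ = ‖gradient (fun u => f u z) x‖ := by
        rw [gradient, LinearIsometryEquiv.norm_map]
      rw [e]; exact hLip z x hx
    have := Convex.norm_image_sub_le_of_norm_fderiv_le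
      (fun x _ => (hdiff z).differentiableAt) hfd hWconv h2 h1
    simpa [Real.norm_eq_abs] using this
  -- integrability of the loss along the algorithm
  have gInt : ∀ (S : List (Fin T)) (z : Fin T), Integrable (fun ξ => f (A S ξ) z) P := by
    intro S z
    have hw0 : A [] ξ0 ∈ W := hAW [] ξ0
    refine Integrable.mono' (g := fun ξ => |f (A [] ξ0) z| + G * ‖A S ξ - A [] ξ0‖) ?_ ?_ ?_
    · exact (integrable_const _).add ((((hAint S).sub (integrable_const _)).norm).const_mul G)
    · exact (hdiff z).continuous.comp_aestronglyMeasurable (hAint S).1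
    · filter_upwards with ξ
      have h1 := hlipn z (A S ξ) (A [] ξ0) (hAW S ξ) hw0
      have h2 : |f (A S ξ) z| ≤ |f (A S ξ) z - f (A [] ξ0) z| + |f (A [] ξ0) z| := by
        have := abs_add_le (f (A S ξ) z - f (A [] ξ0) z) (f (A [] ξ0) z)
        simpa using this
      rw [Real.norm_eq_abs]; linarith
  set pfx : Equiv.Perm (Fin T) → List (Fin T) :=
    fun σ => List.ofFn fun j : Fin m => σ (Fin.castLE hm.le j) with hpfx
  set Φ : List (Fin T) → Fin T → ℝ := fun S z => ∫ ξ, f (A S ξ) z ∂P with hΦ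
  -- step 1 : compute the inner integrals
  have step1 : ∀ σ : Equiv.Perm (Fin T),
      (∫ ξ, (f (A (pfx σ) ξ) (σ ⟨m, hm⟩)
          - (1 / T : ℝ) * ∑ z : Fin T, f (A (pfx σ) ξ) z) ∂P)
        = Φ (pfx σ) (σ ⟨m, hm⟩) - (1 / T : ℝ) * ∑ z : Fin T, Φ (pfx σ) z := by
    intro σ
    rw [integral_sub (gInt _ _)
      ((integrable_finset_sum _ (fun z _ => gInt (pfx σ) z)).const_mul _)]
    rw [integral_const_mul, integral_finset_sum _ (fun z _ => gInt (pfx σ) z)]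
  -- step 2 : per-σ decomposition over positions
  have per : ∀ σ : Equiv.Perm (Fin T),
      Φ (pfx σ) (σ ⟨m, hm⟩) - (1 / T : ℝ) * ∑ z : Fin T, Φ (pfx σ) z
        = (1 / T : ℝ) * ∑ k : Fin T, (Φ (pfx σ) (σ ⟨m, hm⟩) - Φ (pfx σ) (σ k)) := by
    intro σ
    rw [Finset.sum_sub_distrib, Finset.sum_const, Equiv.sum_comp σ (Φ (pfx σ))]
    simp only [Finset.card_univ, Fintype.card_fin, nsmul_eq_mul]
    field_simp
  -- claim A : positions k with m ≤ k contribute 0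
  have claimA : ∀ k : Fin T, m ≤ (k : ℕ) →
      (∑ σ : Equiv.Perm (Fin T), (Φ (pfx σ) (σ ⟨m, hm⟩) - Φ (pfx σ) (σ k))) = 0 := by
    intro k hk
    have key : ∀ σ : Equiv.Perm (Fin T),
        (Φ (pfx (σ * Equiv.swap ⟨m, hm⟩ k)) ((σ * Equiv.swap ⟨m, hm⟩ k) ⟨m, hm⟩)
          - Φ (pfx (σ * Equiv.swap ⟨m, hm⟩ k)) ((σ * Equiv.swap ⟨m, hm⟩ k) k))
        = - (Φ (pfx σ) (σ ⟨m, hm⟩) - Φ (pfx σ) (σ k)) := by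
      intro σ
      have hpfxeq : pfx (σ * Equiv.swap ⟨m, hm⟩ k) = pfx σ := by
        simp only [hpfx]
        congr 1
        funext j
        have hjlt : (j : ℕ) < m := j.isLt
        have hj1 : Fin.castLE hm.le j ≠ ⟨m, hm⟩ := by
          intro h; have := congrArg Fin.val h; simp [Fin.castLE] at this; omega
        have hj2 : Fin.castLE hm.le j ≠ k := by
          intro h; have := congrArg Fin.val h; simp [Fin.castLE] at this; omega
        simp [Equiv.Perm.mul_apply, Equiv.swap_apply_of_ne_of_ne hj1 hj2]
      have h1 : (σ * Equiv.swap ⟨m, hm⟩ k) ⟨m, hm⟩ = σ k := by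
        simp [Equiv.Perm.mul_apply]
      have h2 : (σ * Equiv.swap ⟨m, hm⟩ k) k = σ ⟨m, hm⟩ := by
        simp [Equiv.Perm.mul_apply]
      rw [hpfxeq, h1, h2]; ring
    have hcomp := Equiv.sum_comp (Equiv.mulRight (Equiv.swap (⟨m, hm⟩ : Fin T) k))
      (fun σ => Φ (pfx σ) (σ ⟨m, hm⟩) - Φ (pfx σ) (σ k))
    simp only [Equiv.coe_mulRight] at hcomp
    have : (∑ σ : Equiv.Perm (Fin T), (Φ (pfx σ) (σ ⟨m, hm⟩) - Φ (pfx σ) (σ k)))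
        = - ∑ σ : Equiv.Perm (Fin T), (Φ (pfx σ) (σ ⟨m, hm⟩) - Φ (pfx σ) (σ k)) := by
      conv_lhs => rw [← hcomp]
      rw [← Finset.sum_neg_distrib]
      exact Finset.sum_congr rfl fun σ _ => key σ
    linarith
  -- claim B : positions k < m are controlled by stability
  have claimB : ∀ k : Fin T, (hk : (k : ℕ) < m) →
      (∑ σ : Equiv.Perm (Fin T), (Φ (pfx σ) (σ ⟨m, hm⟩) - Φ (pfx σ) (σ k)))
        ≤ G * (ε m * (Nat.factorial T : ℝ)) := by
    intro k hk
    -- reindex the first summand by σ ↦ σ * swap k m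
    have reind : (∑ σ : Equiv.Perm (Fin T), Φ (pfx σ) (σ ⟨m, hm⟩))
        = ∑ σ : Equiv.Perm (Fin T), Φ ((pfx σ).set (k : ℕ) (σ ⟨m, hm⟩)) (σ k) := by
      rw [← Equiv.sum_comp (Equiv.mulRight (Equiv.swap k (⟨m, hm⟩ : Fin T)))
        (fun σ => Φ (pfx σ) (σ ⟨m, hm⟩))]
      apply Finset.sum_congr rfl
      intro σ _
      simp only [Equiv.coe_mulRight]
      have h1 : (σ * Equiv.swap k ⟨m, hm⟩) ⟨m, hm⟩ = σ k := by
        simp [Equiv.Perm.mul_apply]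
      have hpfxeq : pfx (σ * Equiv.swap k ⟨m, hm⟩) = (pfx σ).set (k : ℕ) (σ ⟨m, hm⟩) := by
        simp only [hpfx]
        apply List.ext_getElem
        · simp
        · intro i hi1 hi2
          have him : i < m := by simpa using hi1
          rw [List.getElem_set]
          rw [List.getElem_ofFn, List.getElem_ofFn]
          by_cases hik : (k : ℕ) = i
          · simp only [if_pos hik]
            have hkc : Fin.castLE hm.le (⟨i, by simpa using hi1⟩ : Fin m) = k := by
              apply Fin.ext; simp [Fin.castLE]; omega
            rw [hkc]
            simp [Equiv.Perm.mul_apply]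
          · simp only [if_neg hik]
            have hj1 : (⟨i, him.trans hm⟩ : Fin T) ≠ k := by
              intro h; have := congrArg Fin.val h; simp at this; omega
            have hj2 : (⟨i, him.trans hm⟩ : Fin T) ≠ ⟨m, hm⟩ := by
              intro h; have := congrArg Fin.val h; simp at this; omega
            simp [Equiv.Perm.mul_apply, Fin.castLE,
              Equiv.swap_apply_of_ne_of_ne hj1 hj2]
      rw [h1, hpfxeq]
    rw [Finset.sum_sub_distrib, reind, ← Finset.sum_sub_distrib]
    have hbound : ∀ σ : Equiv.Perm (Fin T),
        Φ ((pfx σ).set (k : ℕ) (σ ⟨m, hm⟩)) (σ k) - Φ (pfx σ) (σ k)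
          ≤ G * ∫ ξ, ‖A (pfx σ) ξ - A ((pfx σ).set (k : ℕ) (σ ⟨m, hm⟩)) ξ‖ ∂P := by
      intro σ
      simp only [hΦ]
      rw [← integral_sub (gInt _ _) (gInt _ _), ← integral_const_mul]
      apply integral_mono ((gInt _ _).sub (gInt _ _))
        ((((hAint _).sub (hAint _)).norm).const_mul G)
      intro ξ
      have h1 := hlipn (σ k) (A ((pfx σ).set (k : ℕ) (σ ⟨m, hm⟩)) ξ) (A (pfx σ) ξ)
        (hAW _ _) (hAW _ _)
      rw [norm_sub_rev] at h1
      calc f (A ((pfx σ).set (k : ℕ) (σ ⟨m, hm⟩)) ξ) (σ k) - f (A (pfx σ) ξ) (σ k)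
          ≤ |f (A ((pfx σ).set (k : ℕ) (σ ⟨m, hm⟩)) ξ) (σ k) - f (A (pfx σ) ξ) (σ k)| :=
            le_abs_self _
        _ ≤ G * ‖A (pfx σ) ξ - A ((pfx σ).set (k : ℕ) (σ ⟨m, hm⟩)) ξ‖ := h1
    calc (∑ σ : Equiv.Perm (Fin T),
            (Φ ((pfx σ).set (k : ℕ) (σ ⟨m, hm⟩)) (σ k) - Φ (pfx σ) (σ k)))
        ≤ ∑ σ : Equiv.Perm (Fin T),
            G * ∫ ξ, ‖A (pfx σ) ξ - A ((pfx σ).set (k : ℕ) (σ ⟨m, hm⟩)) ξ‖ ∂P :=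
          Finset.sum_le_sum fun σ _ => hbound σ
      _ = G * ∑ σ : Equiv.Perm (Fin T),
            ∫ ξ, ‖A (pfx σ) ξ - A ((pfx σ).set (k : ℕ) (σ ⟨m, hm⟩)) ξ‖ ∂P := by
          rw [Finset.mul_sum]
      _ ≤ G * (ε m * (Nat.factorial T : ℝ)) := by
          apply mul_le_mul_of_nonneg_left ?_ hG
          have := hstab ⟨(k : ℕ), hk⟩
          rw [div_le_iff₀ hTf] at this
          simpa only [hpfx] using this
  -- assemble
  have total : (∑ σ : Equiv.Perm (Fin T),
      ∫ ξ, (f (A (pfx σ) ξ) (σ ⟨m, hm⟩)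
        - (1 / T : ℝ) * ∑ z : Fin T, f (A (pfx σ) ξ) z) ∂P)
      ≤ (1 / T : ℝ) * ((m : ℝ) * (G * (ε m * (Nat.factorial T : ℝ)))) := by
    calc (∑ σ : Equiv.Perm (Fin T),
        ∫ ξ, (f (A (pfx σ) ξ) (σ ⟨m, hm⟩)
          - (1 / T : ℝ) * ∑ z : Fin T, f (A (pfx σ) ξ) z) ∂P)
        = ∑ σ : Equiv.Perm (Fin T),
            (1 / T : ℝ) * ∑ k : Fin T, (Φ (pfx σ) (σ ⟨m, hm⟩) - Φ (pfx σ) (σ k)) := by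
          exact Finset.sum_congr rfl fun σ _ => (step1 σ).trans (per σ)
      _ = (1 / T : ℝ) * ∑ k : Fin T,
            ∑ σ : Equiv.Perm (Fin T), (Φ (pfx σ) (σ ⟨m, hm⟩) - Φ (pfx σ) (σ k)) := by
          rw [← Finset.mul_sum, Finset.sum_comm]
      _ ≤ (1 / T : ℝ) * ∑ k : Fin T,
            (if (k : ℕ) < m then G * (ε m * (Nat.factorial T : ℝ)) else 0) := by
          apply mul_le_mul_of_nonneg_left ?_ (by positivity)
          apply Finset.sum_le_sum
          intro k _
          by_cases hk : (k : ℕ) < m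
          · rw [if_pos hk]; exact claimB k hk
          · rw [if_neg hk, claimA k (le_of_not_gt hk)]
      _ = (1 / T : ℝ) * ((m : ℝ) * (G * (ε m * (Nat.factorial T : ℝ)))) := by
          congr 1
          rw [Finset.sum_ite, Finset.sum_const, Finset.sum_const, smul_zero, add_zero,
            nsmul_eq_mul]
          congr 2
          have : Finset.univ.filter (fun k : Fin T => (k : ℕ) < m)
              = Finset.Iio (⟨m, hm⟩ : Fin T) := by
            ext k; simp [Fin.lt_def]
          rw [this, Fin.card_Iio]
  calc (∑ σ : Equiv.Perm (Fin T),
      ∫ ξ, (f (A (pfx σ) ξ) (σ ⟨m, hm⟩)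
        - (1 / T : ℝ) * ∑ z : Fin T, f (A (pfx σ) ξ) z) ∂P) / (Nat.factorial T : ℝ)
      ≤ ((1 / T : ℝ) * ((m : ℝ) * (G * (ε m * (Nat.factorial T : ℝ))))) / (Nat.factorial T : ℝ) := by
        gcongr
    _ = G * (m : ℝ) / T * ε m := by
        field_simp


/-- For an on-average-oos stable online algorithm, the expected gap
between the realized random-order loss and the population loss at round `t` is at most
`G (t-1) ε(t-1) / T` (Lemma 3.1 of the paper, second claim).
Datapoints are labelled by `Fin T`; a random order sequence is `z_s = σ s` for a
uniformly random permutation `σ`, the iterate `w_t = A (z_1, …, z_{t-1}; ξ)` depends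
only on the prefix of length `t-1` and the seed, and `F` is the population loss. -/
theorem stability_implies_online_population_gap
    {d : ℕ} {Ω : Type*} [MeasurableSpace Ω] (P : Measure Ω) [IsProbabilityMeasure P]
    (T t : ℕ) (ht1 : 1 ≤ t) (htT : t ≤ T)
    (W : Set (EuclideanSpace ℝ (Fin d))) (hWconv : Convex ℝ W)
    (f : EuclideanSpace ℝ (Fin d) → Fin T → ℝ)
    (G : ℝ) (hG : 0 ≤ G)
    (hdiff : ∀ z, Differentiable ℝ (fun w => f w z))
    -- `f(·; z)` is `G`-Lipschitz on `W`
    (hLip : ∀ z : Fin T, ∀ w ∈ W, ‖gradient (fun u => f u z) w‖ ≤ G)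
    (A : List (Fin T) → Ω → EuclideanSpace ℝ (Fin d))
    (hAW : ∀ S ξ, A S ξ ∈ W)
    (hAint : ∀ S : List (Fin T), Integrable (fun ξ => A S ξ) P)
    (ε : ℕ → ℝ)
    -- on-average-oos stability of `A` with rate `ε(m)`
    (hstab : ∀ m, ∀ hm : m < T, ∀ i : Fin m,
      (∑ σ : Equiv.Perm (Fin T),
          ∫ ξ, ‖A (List.ofFn fun j : Fin m => σ (Fin.castLE hm.le j)) ξ
              - A ((List.ofFn fun j : Fin m => σ (Fin.castLE hm.le j)).set (i : ℕ) (σ ⟨m, hm⟩)) ξ‖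
            ∂P)
        / (Nat.factorial T : ℝ) ≤ ε m) :
    -- `E[ f(w_t; z_t) - F(w_t) ] ≤ G (t-1) ε(t-1) / T`
    (∑ σ : Equiv.Perm (Fin T),
        ∫ ξ, (f (A (List.ofFn fun j : Fin (t - 1) => σ (Fin.castLE (by omega) j)) ξ)
                (σ ⟨t - 1, by omega⟩)
          - (1 / T : ℝ) * ∑ z : Fin T,
              f (A (List.ofFn fun j : Fin (t - 1) => σ (Fin.castLE (by omega) j)) ξ) z) ∂P)
      / (Nat.factorial T : ℝ)
    ≤ G * ((t : ℝ) - 1) / T * ε (t - 1) := by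
  have hm : t - 1 < T := by omega
  have h := key_stability_lemma P T (t - 1) hm W hWconv f G hG hdiff hLip A hAW hAint ε
    (hstab (t - 1) hm)
  have hc : ((t - 1 : ℕ) : ℝ) = (t : ℝ) - 1 := by
    have := Nat.cast_sub (R := ℝ) ht1; simpa using this
  rw [← hc]
  exact h
end

section
/- Under the hypotheses of the two-sequence stability setting — W ⊆ ℝ^d closed convex, f(·;z) G-Lipschitz and β-smooth for all z, sequences S = (z_1,…,z_m), S' = (z'_1,…,z'_m) with filtration ℱ_{t−1} = (z_1, z'_1,…, z_{t−1}, z'_{t−1}) satisfying Pr(z_t ≠ z'_t | ℱ_{t−1}) ≤ δ for all t ≠ i and E[f(w; z_t) | ℱ_{t−1}] μ-strongly convex in ℱ_{t−1}-measurable w ∈ W, with 0 ≤ δ ≤ μ/(2β) — let w_t and w'_t be the projected gradient descent iterates on S and S' respectively from the same w_1, with step sizes satisfying η_t ≤ μ̃/β² where μ̃ := μ − δβ, and set ω_t := ‖w_t − w'_t‖. Then E ω_{t+1} ≤ (1 − η_t μ̃/2) E ω_t + 2δη_t G for all t ≠ i, and E ω_{i+1} ≤ E ω_i + 2η_i G.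 -/
/-!
Fix a round `t` and condition on the history `ℱ_{t-1}`: on each atom of `ℱ_{t-1}` the iterates
`w_t = x` and `w'_t = y` are constant, while the samples `z_t, z'_t` are still random. Since the
projection onto a convex set is nonexpansive,
`‖w_{t+1} - w'_{t+1}‖ ≤ ‖x - y - η (∇f(x; z_t) - ∇f(y; z_t))‖ + η ‖∇f(y; z_t) - ∇f(y; z'_t)‖`.
The second term vanishes unless `z_t ≠ z'_t`, an event of conditional probability at most `δ`,
and is at most `2ηG`. For the first, strong convexity of `E[f(·; z_t) | ℱ_{t-1}]` makes its
gradient `μ`-strongly monotone; with `β`-smoothness and `ηβ² ≤ μ̃ ≤ μ` this gives a conditional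
second moment at most `(1 - ημ̃) ‖x - y‖²`, so by Cauchy–Schwarz a conditional first moment at
most `(1 - ημ̃/2) ‖x - y‖`. Summing over the atoms gives the recursion. In round `i` the samples
are not coupled and only the bound `‖x - y‖ + 2ηG` remains.
-/

open scoped Classical

/-- `F` is `μ`-strongly convex on `W` (via its gradient). -/
def StrongConvexOnSet {d : ℕ} (W : Set (EuclideanSpace ℝ (Fin d))) (μ : ℝ)
    (F : EuclideanSpace ℝ (Fin d) → ℝ) : Prop :=
  ∀ x ∈ W, ∀ y ∈ W,
    F x + (inner ℝ (gradient F x) (y - x) : ℝ) + μ / 2 * ‖y - x‖ ^ 2 ≤ F y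

open Finset

section NearestPoint

variable {F : Type*} [NormedAddCommGroup F] [InnerProductSpace ℝ F] {K : Set F} {π : F → F}

def IsNearestPointMap (K : Set F) (π : F → F) : Prop :=
  ∀ x, π x ∈ K ∧ ∀ w ∈ K, ‖x - π x‖ ≤ ‖x - w‖

theorem IsNearestPointMap.inner_sub_le_zero (hK : Convex ℝ K) (hπ : IsNearestPointMap K π)
    (x : F) {w : F} (hw : w ∈ K) : inner ℝ (x - π x) (w - π x) ≤ 0 := by
  have : Nonempty K := ⟨⟨w, hw⟩⟩
  have hinf : ‖x - π x‖ = ⨅ w : K, ‖x - w‖ :=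
    le_antisymm (le_ciInf fun w => (hπ x).2 w w.2)
      (ciInf_le (f := fun w : K => ‖x - w‖) ⟨0, Set.forall_mem_range.2 fun _ => norm_nonneg _⟩
        ⟨π x, (hπ x).1⟩)
  exact (norm_eq_iInf_iff_real_inner_le_zero hK (hπ x).1).1 hinf w hw

theorem IsNearestPointMap.norm_sub_le (hK : Convex ℝ K) (hπ : IsNearestPointMap K π) (x y : F) :
    ‖π x - π y‖ ≤ ‖x - y‖ := by
  have hx := hπ.inner_sub_le_zero hK x (hπ y).1
  have hy := hπ.inner_sub_le_zero hK y (hπ x).1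
  have hsq : ‖π x - π y‖ ^ 2 ≤ inner ℝ (x - y) (π x - π y) := by
    have : inner ℝ (x - y) (π x - π y) - ‖π x - π y‖ ^ 2
        = -inner ℝ (x - π x) (π y - π x) - inner ℝ (y - π y) (π x - π y) := by
      rw [← real_inner_self_eq_norm_sq]
      simp only [inner_sub_left, inner_sub_right]
      ring
    linarith
  have hcs := real_inner_le_norm (x - y) (π x - π y)
  nlinarith [norm_nonneg (π x - π y), norm_nonneg (x - y)]

theorem IsNearestPointMap.norm_step_sub_step_le (hK : Convex ℝ K) (hπ : IsNearestPointMap K π)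
    (x y a b c : F) {η : ℝ} (hη : 0 ≤ η) :
    ‖π (x - η • a) - π (y - η • b)‖ ≤ ‖x - y - η • (a - c)‖ + η * ‖c - b‖ := by
  calc ‖π (x - η • a) - π (y - η • b)‖ ≤ ‖(x - η • a) - (y - η • b)‖ := hπ.norm_sub_le hK _ _
    _ = ‖(x - y - η • (a - c)) - η • (c - b)‖ := by congr 1; module
    _ ≤ ‖x - y - η • (a - c)‖ + η * ‖c - b‖ := by
      grw [_root_.norm_sub_le, norm_smul, Real.norm_of_nonneg hη]

theorem IsNearestPointMap.norm_step_sub_step_le_add (hK : Convex ℝ K)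
    (hπ : IsNearestPointMap K π) (x y : F) {a b : F} {η G : ℝ} (hη : 0 ≤ η)
    (ha : ‖a‖ ≤ G) (hb : ‖b‖ ≤ G) :
    ‖π (x - η • a) - π (y - η • b)‖ ≤ ‖x - y‖ + 2 * η * G := by
  have hab : ‖a - b‖ ≤ 2 * G := by linarith [_root_.norm_sub_le a b]
  calc _ ≤ ‖x - y - η • (a - a)‖ + η * ‖a - b‖ := hπ.norm_step_sub_step_le hK x y a b a hη
    _ ≤ ‖x - y‖ + η * (2 * G) := by rw [sub_self, smul_zero, sub_zero]; gcongr
    _ = _ := by ring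

theorem IsNearestPointMap.sum_mul_norm_step_sub_step_le_add {Ω : Type*} [Fintype Ω]
    (hK : Convex ℝ K) (hπ : IsNearestPointMap K π) {p : Ω → ℝ} (hp0 : ∀ ω, 0 ≤ p ω)
    (hp1 : ∑ ω, p ω = 1) (x y : Ω → F) {a b : Ω → F} {η G : ℝ} (hη : 0 ≤ η)
    (ha : ∀ ω, ‖a ω‖ ≤ G) (hb : ∀ ω, ‖b ω‖ ≤ G) :
    ∑ ω, p ω * ‖π (x ω - η • a ω) - π (y ω - η • b ω)‖
      ≤ ∑ ω, p ω * ‖x ω - y ω‖ + 2 * η * G := by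
  calc _ ≤ ∑ ω, p ω * (‖x ω - y ω‖ + 2 * η * G) := sum_le_sum fun ω _ =>
        mul_le_mul_of_nonneg_left (hπ.norm_step_sub_step_le_add hK _ _ hη (ha ω) (hb ω)) (hp0 ω)
    _ = _ := by simp only [mul_add, sum_add_distrib, ← sum_mul, hp1, one_mul]

end NearestPoint

theorem sum_mul_norm_sub_le_of_sum_filter_ne_le {E ι Z : Type*} [SeminormedAddCommGroup E]
    [DecidableEq Z] (A : Finset ι)
    {p : ι → ℝ} (hp : ∀ i ∈ A, 0 ≤ p i) (ζ ζ' : ι → Z) {g : Z → E} {G δ : ℝ}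
    (hg : ∀ z, ‖g z‖ ≤ G) (hG : 0 ≤ G)
    (hdis : ∑ i ∈ A with ζ i ≠ ζ' i, p i ≤ δ * ∑ i ∈ A, p i) :
    ∑ i ∈ A, p i * ‖g (ζ i) - g (ζ' i)‖ ≤ 2 * G * (δ * ∑ i ∈ A, p i) := by
  calc ∑ i ∈ A, p i * ‖g (ζ i) - g (ζ' i)‖
      = ∑ i ∈ A with ζ i ≠ ζ' i, p i * ‖g (ζ i) - g (ζ' i)‖ := by
        refine (sum_filter_of_ne fun i _ hne hζ => ?_).symm
        simp [hζ] at hne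
    _ ≤ ∑ i ∈ A with ζ i ≠ ζ' i, p i * (2 * G) := by
        refine sum_le_sum fun i hi => mul_le_mul_of_nonneg_left ?_ (hp i (mem_filter.1 hi).1)
        linarith [norm_sub_le (g (ζ i)) (g (ζ' i)), hg (ζ i), hg (ζ' i)]
    _ ≤ 2 * G * (δ * ∑ i ∈ A, p i) := by
        rw [← sum_mul, mul_comm]
        gcongr

section Contraction

variable {E ι : Type*} [NormedAddCommGroup E] [InnerProductSpace ℝ E]

theorem sum_mul_norm_sub_smul_sq_le (A : Finset ι) {p : ι → ℝ} (hp : ∀ i ∈ A, 0 ≤ p i)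
    (v : E) (g : ι → E) {β μ η : ℝ}
    (hmono : μ * ((∑ i ∈ A, p i) * ‖v‖ ^ 2) ≤ ∑ i ∈ A, p i * inner ℝ (g i) v)
    (hg : ∀ i ∈ A, ‖g i‖ ≤ β * ‖v‖) (hη : 0 ≤ η) (hηβ : η * β ^ 2 ≤ μ) :
    ∑ i ∈ A, p i * ‖v - η • g i‖ ^ 2 ≤ (1 - η * μ) * ((∑ i ∈ A, p i) * ‖v‖ ^ 2) := by
  have hpoint : ∀ i ∈ A, p i * ‖v - η • g i‖ ^ 2
      ≤ (1 + η ^ 2 * β ^ 2) * (p i * ‖v‖ ^ 2) - 2 * η * (p i * inner ℝ (g i) v) := by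
    intro i hi
    have hsq : ‖g i‖ ^ 2 ≤ β ^ 2 * ‖v‖ ^ 2 :=
      (pow_le_pow_left₀ (norm_nonneg _) (hg i hi) 2).trans_eq (mul_pow _ _ _)
    have hexp : ‖v - η • g i‖ ^ 2 = ‖v‖ ^ 2 - 2 * η * inner ℝ (g i) v + η ^ 2 * ‖g i‖ ^ 2 := by
      rw [norm_sub_sq_real, real_inner_smul_right, norm_smul, Real.norm_eq_abs, mul_pow, sq_abs,
        real_inner_comm]
      ring
    rw [hexp]
    nlinarith [hp i hi, mul_le_mul_of_nonneg_left hsq (mul_nonneg (hp i hi) (sq_nonneg η))]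
  calc ∑ i ∈ A, p i * ‖v - η • g i‖ ^ 2
      ≤ ∑ i ∈ A, ((1 + η ^ 2 * β ^ 2) * (p i * ‖v‖ ^ 2) - 2 * η * (p i * inner ℝ (g i) v)) :=
        sum_le_sum hpoint
    _ = (1 + η ^ 2 * β ^ 2) * ((∑ i ∈ A, p i) * ‖v‖ ^ 2)
          - 2 * η * ∑ i ∈ A, p i * inner ℝ (g i) v := by
        rw [sum_sub_distrib, ← mul_sum, ← mul_sum, sum_mul]
    _ ≤ (1 - η * μ) * ((∑ i ∈ A, p i) * ‖v‖ ^ 2) := by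
        have hP : 0 ≤ (∑ i ∈ A, p i) * ‖v‖ ^ 2 := mul_nonneg (sum_nonneg hp) (sq_nonneg _)
        nlinarith [mul_le_mul_of_nonneg_left hηβ hη]

theorem le_one_sub_half_mul_of_sq_le {X Q κ : ℝ} (hX : 0 ≤ X) (hQ : 0 ≤ Q)
    (h : X ^ 2 ≤ (1 - κ) * Q ^ 2) : X ≤ (1 - κ / 2) * Q := by
  have hsq : X ^ 2 ≤ ((1 - κ / 2) * Q) ^ 2 := by nlinarith [sq_nonneg (κ * Q)]
  have hR : 0 ≤ (1 - κ / 2) * Q := by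
    rcases hQ.eq_or_lt with rfl | hQ
    · simp
    have hκ : 0 ≤ 1 - κ :=
      le_of_mul_le_mul_right (by rw [zero_mul]; exact (sq_nonneg X).trans h) (pow_pos hQ 2)
    exact mul_nonneg (by linarith) hQ.le
  exact (pow_le_pow_iff_left₀ hX hR two_ne_zero).1 hsq

theorem sum_mul_le_of_sum_mul_sq_le (A : Finset ι) {p a : ι → ℝ} (hp : ∀ i ∈ A, 0 ≤ p i)
    (ha : ∀ i ∈ A, 0 ≤ a i) {κ r : ℝ} (hr : 0 ≤ r)
    (h : ∑ i ∈ A, p i * a i ^ 2 ≤ (1 - κ) * ((∑ i ∈ A, p i) * r ^ 2)) :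
    ∑ i ∈ A, p i * a i ≤ (1 - κ / 2) * ((∑ i ∈ A, p i) * r) := by
  have hP := sum_nonneg hp
  have hcs : (∑ i ∈ A, p i * a i) ^ 2 ≤ (∑ i ∈ A, p i) * ∑ i ∈ A, p i * a i ^ 2 :=
    sum_sq_le_sum_mul_sum_of_sq_le_mul A hp (fun i hi => mul_nonneg (hp i hi) (sq_nonneg _))
      (fun i _ => (by ring : (p i * a i) ^ 2 = p i * (p i * a i ^ 2)).le)
  refine le_one_sub_half_mul_of_sq_le (sum_nonneg fun i hi => mul_nonneg (hp i hi) (ha i hi))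
    (mul_nonneg hP hr) ?_
  calc (∑ i ∈ A, p i * a i) ^ 2 ≤ (∑ i ∈ A, p i) * ∑ i ∈ A, p i * a i ^ 2 := hcs
    _ ≤ (∑ i ∈ A, p i) * ((1 - κ) * ((∑ i ∈ A, p i) * r ^ 2)) := by gcongr
    _ = (1 - κ) * ((∑ i ∈ A, p i) * r) ^ 2 := by ring

end Contraction

theorem inner_gradient_sum_mul_div {F ι : Type*} [NormedAddCommGroup F] [InnerProductSpace ℝ F]
    [CompleteSpace F] (A : Finset ι) (c : ι → ℝ) {g : ι → F → ℝ} {x : F}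
    (hg : ∀ i ∈ A, DifferentiableAt ℝ (g i) x) (P : ℝ) (v : F) :
    inner ℝ (gradient (fun w => (∑ i ∈ A, c i * g i w) / P) x) v
      = (∑ i ∈ A, c i * inner ℝ (gradient (g i) x) v) / P := by
  have hfun : (fun w => (∑ i ∈ A, c i * g i w) / P) = fun w => ∑ i ∈ A, c i / P * g i w := by
    ext w
    rw [sum_div]
    exact sum_congr rfl fun i _ => mul_div_right_comm _ _ _
  rw [hfun, inner_gradient_left, fderiv_fun_sum fun i hi => (hg i hi).const_mul _,
    _root_.sum_apply, sum_div]
  refine sum_congr rfl fun i hi => ?_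
  rw [fderiv_const_mul (hg i hi), smul_apply, inner_gradient_left, smul_eq_mul]
  ring

section StrongConvexity

variable {d : ℕ} {W : Set (EuclideanSpace ℝ (Fin d))} {μ : ℝ}

theorem StrongConvexOnSet.mul_norm_sub_sq_le_inner_gradient_sub
    {F : EuclideanSpace ℝ (Fin d) → ℝ} (h : StrongConvexOnSet W μ F) {x y} (hx : x ∈ W)
    (hy : y ∈ W) : μ * ‖x - y‖ ^ 2 ≤ inner ℝ (gradient F x - gradient F y) (x - y) := by
  have hxy := h x hx y hy
  have hyx := h y hy x hx
  rw [← neg_sub x y, inner_neg_right, norm_neg] at hxy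
  rw [inner_sub_left]
  linarith

theorem mul_sum_mul_norm_sub_sq_le_sum_mul_inner_gradient_sub {ι Z : Type*} (A : Finset ι)
    {p : ι → ℝ} (hp : ∀ i ∈ A, 0 ≤ p i) {f : EuclideanSpace ℝ (Fin d) → Z → ℝ}
    (hdiff : ∀ z, Differentiable ℝ (fun w => f w z)) (ζ : ι → Z)
    (hSC : 0 < ∑ i ∈ A, p i →
      StrongConvexOnSet W μ (fun w => (∑ i ∈ A, p i * f w (ζ i)) / ∑ i ∈ A, p i))
    {x y} (hx : x ∈ W) (hy : y ∈ W) :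
    μ * ((∑ i ∈ A, p i) * ‖x - y‖ ^ 2) ≤ ∑ i ∈ A, p i *
      inner ℝ (gradient (fun u => f u (ζ i)) x - gradient (fun u => f u (ζ i)) y) (x - y) := by
  rcases (sum_nonneg hp).eq_or_lt with hP | hP
  · have hp0 := (sum_eq_zero_iff_of_nonneg hp).1 hP.symm
    rw [← hP, sum_eq_zero fun i hi => by rw [hp0 i hi, zero_mul]]
    simp
  have h := (hSC hP).mul_norm_sub_sq_le_inner_gradient_sub hx hy
  rw [inner_sub_left, inner_gradient_sum_mul_div A p (fun i _ => hdiff (ζ i) x),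
    inner_gradient_sum_mul_div A p (fun i _ => hdiff (ζ i) y), ← sub_div, le_div_iff₀ hP,
    ← sum_sub_distrib] at h
  simp only [inner_sub_left, mul_sub]
  linarith

end StrongConvexity

theorem sum_mul_norm_step_sub_step_le {d : ℕ} {ι Z : Type*} [DecidableEq Z] (A : Finset ι)
    {p : ι → ℝ} (hp : ∀ i ∈ A, 0 ≤ p i) {W : Set (EuclideanSpace ℝ (Fin d))} (hW : Convex ℝ W)
    {proj : EuclideanSpace ℝ (Fin d) → EuclideanSpace ℝ (Fin d)}
    (hproj : IsNearestPointMap W proj) {f : EuclideanSpace ℝ (Fin d) → Z → ℝ} {G β μ δ η : ℝ}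
    (hdiff : ∀ z, Differentiable ℝ (fun w => f w z))
    (hLip : ∀ z, ∀ w ∈ W, ‖gradient (fun u => f u z) w‖ ≤ G)
    (hsmooth : ∀ z, ∀ x ∈ W, ∀ y ∈ W,
      ‖gradient (fun u => f u z) x - gradient (fun u => f u z) y‖ ≤ β * ‖x - y‖)
    (ζ ζ' : ι → Z) {x y} (hx : x ∈ W) (hy : y ∈ W)
    (hdis : ∑ i ∈ A with ζ i ≠ ζ' i, p i ≤ δ * ∑ i ∈ A, p i)
    (hSC : 0 < ∑ i ∈ A, p i →
      StrongConvexOnSet W μ (fun w => (∑ i ∈ A, p i * f w (ζ i)) / ∑ i ∈ A, p i))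
    (hG : 0 ≤ G) (hδ : 0 ≤ δ) (hβ : 0 ≤ β) (hη : 0 ≤ η) (hηβ : η * β ^ 2 ≤ μ - δ * β) :
    ∑ i ∈ A, p i * ‖proj (x - η • gradient (fun u => f u (ζ i)) x)
        - proj (y - η • gradient (fun u => f u (ζ' i)) y)‖
      ≤ (1 - η * (μ - δ * β) / 2) * ((∑ i ∈ A, p i) * ‖x - y‖)
        + 2 * δ * η * G * ∑ i ∈ A, p i := by
  set P := ∑ i ∈ A, p i
  set g := fun i => gradient (fun u => f u (ζ i)) x - gradient (fun u => f u (ζ i)) y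
  set e := fun i => gradient (fun u => f u (ζ i)) y - gradient (fun u => f u (ζ' i)) y
  have hstep : ∀ i ∈ A, p i * ‖proj (x - η • gradient (fun u => f u (ζ i)) x)
      - proj (y - η • gradient (fun u => f u (ζ' i)) y)‖
        ≤ p i * ‖x - y - η • g i‖ + η * (p i * ‖e i‖) := fun i hi => by
    have := hproj.norm_step_sub_step_le hW x y (gradient (fun u => f u (ζ i)) x)
      (gradient (fun u => f u (ζ' i)) y) (gradient (fun u => f u (ζ i)) y) hη
    calc _ ≤ p i * (‖x - y - η • g i‖ + η * ‖e i‖) := mul_le_mul_of_nonneg_left this (hp i hi)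
      _ = _ := by ring
  have hdisagree : ∑ i ∈ A, p i * ‖e i‖ ≤ 2 * G * (δ * P) :=
    sum_mul_norm_sub_le_of_sum_filter_ne_le A hp ζ ζ' (fun z => hLip z y hy) hG hdis
  -- strong monotonicity for `μ` implies it for the smaller `μ̃ = μ - δβ`, for which `ηβ² ≤ μ̃`
  have hcontract :
      ∑ i ∈ A, p i * ‖x - y - η • g i‖ ≤ (1 - η * (μ - δ * β) / 2) * (P * ‖x - y‖) := by
    refine sum_mul_le_of_sum_mul_sq_le A hp (fun i _ => norm_nonneg _) (norm_nonneg _) ?_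
    refine sum_mul_norm_sub_smul_sq_le A hp (x - y) g ?_ (fun i _ => hsmooth _ x hx y hy) hη hηβ
    have hmono := mul_sum_mul_norm_sub_sq_le_sum_mul_inner_gradient_sub A hp hdiff ζ hSC hx hy
    have hPr : 0 ≤ P * ‖x - y‖ ^ 2 := mul_nonneg (sum_nonneg hp) (sq_nonneg _)
    nlinarith [mul_nonneg (mul_nonneg hδ hβ) hPr]
  calc _ ≤ ∑ i ∈ A, (p i * ‖x - y - η • g i‖ + η * (p i * ‖e i‖)) := sum_le_sum hstep
    _ = ∑ i ∈ A, p i * ‖x - y - η • g i‖ + η * ∑ i ∈ A, p i * ‖e i‖ := by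
        rw [sum_add_distrib, mul_sum]
    _ ≤ (1 - η * (μ - δ * β) / 2) * (P * ‖x - y‖) + η * (2 * G * (δ * P)) := by
        gcongr
    _ = _ := by ring

theorem sum_le_sum_of_forall_fiber_le {Ω κ : Type*} [Fintype Ω] [DecidableEq κ] (key : Ω → κ)
    {a b : Ω → ℝ} (h : ∀ ω₀, ∑ ω with key ω = key ω₀, a ω ≤ ∑ ω with key ω = key ω₀, b ω) :
    ∑ ω, a ω ≤ ∑ ω, b ω := by
  have hmaps : ∀ ω ∈ (univ : Finset Ω), key ω ∈ univ.image key :=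
    fun ω _ => mem_image_of_mem key (mem_univ ω)
  rw [← sum_fiberwise_of_maps_to hmaps, ← sum_fiberwise_of_maps_to hmaps]
  refine sum_le_sum fun k hk => ?_
  obtain ⟨ω₀, -, rfl⟩ := mem_image.1 hk
  exact h ω₀

theorem sum_mul_norm_step_sub_step_le_of_fiberwise {d : ℕ} {Ω Z κ : Type*} [Fintype Ω]
    [DecidableEq Z] [DecidableEq κ] {p : Ω → ℝ} (hp0 : ∀ ω, 0 ≤ p ω) (hp1 : ∑ ω, p ω = 1)
    {W : Set (EuclideanSpace ℝ (Fin d))} (hW : Convex ℝ W)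
    {proj : EuclideanSpace ℝ (Fin d) → EuclideanSpace ℝ (Fin d)}
    (hproj : IsNearestPointMap W proj) {f : EuclideanSpace ℝ (Fin d) → Z → ℝ} {G β μ δ η : ℝ}
    (hdiff : ∀ z, Differentiable ℝ (fun w => f w z))
    (hLip : ∀ z, ∀ w ∈ W, ‖gradient (fun u => f u z) w‖ ≤ G)
    (hsmooth : ∀ z, ∀ x ∈ W, ∀ y ∈ W,
      ‖gradient (fun u => f u z) x - gradient (fun u => f u z) y‖ ≤ β * ‖x - y‖)
    (key : Ω → κ) (ζ ζ' : Ω → Z)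
    (hdis : ∀ ω₀, ∑ ω with key ω = key ω₀ ∧ ζ ω ≠ ζ' ω, p ω
      ≤ δ * ∑ ω with key ω = key ω₀, p ω)
    (hSC : ∀ ω₀, 0 < ∑ ω with key ω = key ω₀, p ω → StrongConvexOnSet W μ (fun w =>
      (∑ ω with key ω = key ω₀, p ω * f w (ζ ω)) / ∑ ω with key ω = key ω₀, p ω))
    {x y : Ω → EuclideanSpace ℝ (Fin d)} (hx : ∀ ω, x ω ∈ W) (hy : ∀ ω, y ω ∈ W)
    (hconst : ∀ ω ω', key ω' = key ω → x ω' = x ω ∧ y ω' = y ω)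
    (hG : 0 ≤ G) (hδ : 0 ≤ δ) (hβ : 0 ≤ β) (hη : 0 ≤ η) (hηβ : η * β ^ 2 ≤ μ - δ * β) :
    ∑ ω, p ω * ‖proj (x ω - η • gradient (fun u => f u (ζ ω)) (x ω))
        - proj (y ω - η • gradient (fun u => f u (ζ' ω)) (y ω))‖
      ≤ (1 - η * (μ - δ * β) / 2) * ∑ ω, p ω * ‖x ω - y ω‖ + 2 * δ * η * G := by
  calc _ ≤ ∑ ω, ((1 - η * (μ - δ * β) / 2) * (p ω * ‖x ω - y ω‖) + 2 * δ * η * G * p ω) := by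
        refine sum_le_sum_of_forall_fiber_le key fun ω₀ => ?_
        set A := univ.filter fun ω => key ω = key ω₀
        have hconstA : ∀ ω ∈ A, x ω = x ω₀ ∧ y ω = y ω₀ :=
          fun ω hω => hconst ω₀ ω (mem_filter.1 hω).2
        calc ∑ ω ∈ A, p ω * ‖proj (x ω - η • gradient (fun u => f u (ζ ω)) (x ω))
                - proj (y ω - η • gradient (fun u => f u (ζ' ω)) (y ω))‖
            = ∑ ω ∈ A, p ω * ‖proj (x ω₀ - η • gradient (fun u => f u (ζ ω)) (x ω₀))
                - proj (y ω₀ - η • gradient (fun u => f u (ζ' ω)) (y ω₀))‖ :=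
              sum_congr rfl fun ω hω => by rw [(hconstA ω hω).1, (hconstA ω hω).2]
          _ ≤ (1 - η * (μ - δ * β) / 2) * ((∑ ω ∈ A, p ω) * ‖x ω₀ - y ω₀‖)
                + 2 * δ * η * G * ∑ ω ∈ A, p ω :=
              sum_mul_norm_step_sub_step_le A (fun ω _ => hp0 ω) hW hproj hdiff hLip hsmooth ζ ζ'
                (hx ω₀) (hy ω₀) (by rw [filter_filter]; exact hdis ω₀) (hSC ω₀) hG hδ hβ hη hηβ
          _ = _ := by
              rw [sum_add_distrib, ← mul_sum, ← mul_sum, sum_mul]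
              congr 2
              exact sum_congr rfl fun ω hω => by rw [(hconstA ω hω).1, (hconstA ω hω).2]
    _ = _ := by rw [sum_add_distrib, ← mul_sum, ← mul_sum, hp1, mul_one]

section History

variable {Ω Z : Type*}

/-- The data `(z_s, z'_s)_{1 ≤ s ≤ t-1}` generating `ℱ_{t-1}`; its fibers are the atoms of
`ℱ_{t-1}`. -/
def history (z z' : ℕ → Ω → Z) (t : ℕ) (ω : Ω) : Icc 1 (t - 1) → Z × Z :=
  fun s => (z s ω, z' s ω)

theorem history_eq_history_iff {z z' : ℕ → Ω → Z} {t : ℕ} {ω ω' : Ω} :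
    history z z' t ω' = history z z' t ω ↔
      ∀ s ∈ Icc 1 (t - 1), z s ω' = z s ω ∧ z' s ω' = z' s ω := by
  simp [history, funext_iff, Prod.ext_iff]

theorem filter_history_eq_history [Fintype Ω] [DecidableEq Z] (z z' : ℕ → Ω → Z) (t : ℕ)
    (ω₀ : Ω) : (univ.filter fun ω => history z z' t ω = history z z' t ω₀)
      = univ.filter fun ω => ∀ s ∈ Icc 1 (t - 1), z s ω = z s ω₀ ∧ z' s ω = z' s ω₀ := by
  ext ω
  simp only [mem_filter, mem_univ, true_and, history_eq_history_iff]

variable {X : Type*} (Φ : ℕ → X → Z → X) {x₁ : X} {u u' : ℕ → Ω → X} {z z' : ℕ → Ω → Z} {m : ℕ}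

theorem mem_of_coupled_recursion {K : Set X} (hΦ : ∀ t x ζ, Φ t x ζ ∈ K) (hx₁ : x₁ ∈ K)
    (hinit : ∀ ω, u 1 ω = x₁ ∧ u' 1 ω = x₁)
    (hstep : ∀ t, 1 ≤ t → t ≤ m → ∀ ω,
      u (t + 1) ω = Φ t (u t ω) (z t ω) ∧ u' (t + 1) ω = Φ t (u' t ω) (z' t ω))
    {t : ℕ} (ht1 : 1 ≤ t) (htm : t ≤ m + 1) (ω : Ω) : u t ω ∈ K ∧ u' t ω ∈ K := by
  rcases ht1.eq_or_lt with rfl | ht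
  · rw [(hinit ω).1, (hinit ω).2]
    exact ⟨hx₁, hx₁⟩
  obtain ⟨s, rfl⟩ : ∃ s, t = s + 1 := ⟨t - 1, by omega⟩
  rw [(hstep s (by omega) (by omega) ω).1, (hstep s (by omega) (by omega) ω).2]
  exact ⟨hΦ _ _ _, hΦ _ _ _⟩

theorem eq_of_history_eq_of_coupled_recursion (hinit : ∀ ω, u 1 ω = x₁ ∧ u' 1 ω = x₁)
    (hstep : ∀ t, 1 ≤ t → t ≤ m → ∀ ω,
      u (t + 1) ω = Φ t (u t ω) (z t ω) ∧ u' (t + 1) ω = Φ t (u' t ω) (z' t ω))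
    {t : ℕ} (ht1 : 1 ≤ t) (htm : t ≤ m + 1) {ω ω' : Ω}
    (h : history z z' t ω' = history z z' t ω) : u t ω' = u t ω ∧ u' t ω' = u' t ω := by
  rw [history_eq_history_iff] at h
  induction t, ht1 using Nat.le_induction with
  | base => rw [(hinit ω).1, (hinit ω).2, (hinit ω').1, (hinit ω').2]; exact ⟨rfl, rfl⟩
  | succ t ht ih =>
    have hprev := ih (by omega) fun s hs => h s (by simp only [mem_Icc] at hs ⊢; omega)
    have hnow := h t (by simp only [mem_Icc]; omega)
    rw [(hstep t ht (by omega) ω').1, (hstep t ht (by omega) ω').2, (hstep t ht (by omega) ω).1,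
      (hstep t ht (by omega) ω).2, hprev.1, hprev.2, hnow.1, hnow.2]
    exact ⟨rfl, rfl⟩

end History

theorem gd_stability_recursion_general
    {d : ℕ} {Ω Z : Type*} [Fintype Ω] [DecidableEq Z]
    (p : Ω → ℝ) (hp0 : ∀ ω, 0 ≤ p ω) (hp1 : ∑ ω, p ω = 1)
    (W : Set (EuclideanSpace ℝ (Fin d))) (hWconv : Convex ℝ W)
    (proj : EuclideanSpace ℝ (Fin d) → EuclideanSpace ℝ (Fin d))
    (hproj : ∀ x, proj x ∈ W ∧ ∀ w ∈ W, ‖x - proj x‖ ≤ ‖x - w‖)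
    (f : EuclideanSpace ℝ (Fin d) → Z → ℝ)
    (G β μ δ : ℝ) (hG : 0 < G) (hβ : 0 < β)
    (hδ0 : 0 ≤ δ)
    (hdiff : ∀ z, Differentiable ℝ (fun w => f w z))
    (hLip : ∀ z, ∀ w ∈ W, ‖gradient (fun u => f u z) w‖ ≤ G)
    (hsmooth : ∀ z, ∀ x ∈ W, ∀ y ∈ W,
      ‖gradient (fun u => f u z) x - gradient (fun u => f u z) y‖ ≤ β * ‖x - y‖)
    (m i : ℕ) (hi1 : 1 ≤ i) (him : i ≤ m)
    (z z' : ℕ → Ω → Z)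
    -- condition (i): `Pr(z_t ≠ z'_t ∣ ℱ_{t-1}) ≤ δ` for all `t ≠ i`
    (hcond1 : ∀ t, 1 ≤ t → t ≤ m → t ≠ i → ∀ ω : Ω,
      (∑ ω' ∈ Finset.univ.filter (fun ω' =>
            (∀ s ∈ Finset.Icc 1 (t - 1), z s ω' = z s ω ∧ z' s ω' = z' s ω) ∧ z t ω' ≠ z' t ω'),
          p ω')
        ≤ δ * ∑ ω' ∈ Finset.univ.filter (fun ω' =>
            ∀ s ∈ Finset.Icc 1 (t - 1), z s ω' = z s ω ∧ z' s ω' = z' s ω), p ω')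
    -- condition (ii): `E[f(w; z_t) ∣ ℱ_{t-1}]` is `μ`-strongly convex on `W`
    (hcond2 : ∀ t, 1 ≤ t → t ≤ m → ∀ ω : Ω,
      0 < (∑ ω' ∈ Finset.univ.filter (fun ω' =>
            ∀ s ∈ Finset.Icc 1 (t - 1), z s ω' = z s ω ∧ z' s ω' = z' s ω), p ω') →
      StrongConvexOnSet W μ (fun w =>
        (∑ ω' ∈ Finset.univ.filter (fun ω' =>
            ∀ s ∈ Finset.Icc 1 (t - 1), z s ω' = z s ω ∧ z' s ω' = z' s ω), p ω' * f w (z t ω'))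
        / (∑ ω' ∈ Finset.univ.filter (fun ω' =>
            ∀ s ∈ Finset.Icc 1 (t - 1), z s ω' = z s ω ∧ z' s ω' = z' s ω), p ω')))
    -- step sizes: only `0 ≤ η_t ≤ μ̃ / β²` is required
    (η : ℕ → ℝ) (hη0 : ∀ t, 0 ≤ η t) (hηb : ∀ t, η t ≤ (μ - δ * β) / β ^ 2)
    -- the coupled projected gradient descent iterates, from the same initialization
    (w1 : EuclideanSpace ℝ (Fin d)) (hw1 : w1 ∈ W)
    (w w' : ℕ → Ω → EuclideanSpace ℝ (Fin d))
    (hinit : ∀ ω, w 1 ω = w1 ∧ w' 1 ω = w1)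
    (hstep : ∀ t, 1 ≤ t → t ≤ m → ∀ ω,
      w (t + 1) ω = proj (w t ω - η t • gradient (fun u => f u (z t ω)) (w t ω)) ∧
      w' (t + 1) ω = proj (w' t ω - η t • gradient (fun u => f u (z' t ω)) (w' t ω))) :
    (∀ t, 1 ≤ t → t ≤ m → t ≠ i →
      ∑ ω, p ω * ‖w (t + 1) ω - w' (t + 1) ω‖
        ≤ (1 - η t * (μ - δ * β) / 2) * ∑ ω, p ω * ‖w t ω - w' t ω‖ + 2 * δ * η t * G)
    ∧ ∑ ω, p ω * ‖w (i + 1) ω - w' (i + 1) ω‖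
        ≤ (∑ ω, p ω * ‖w i ω - w' i ω‖) + 2 * η i * G := by
  have hproj' : IsNearestPointMap W proj := hproj
  set Φ := fun t x ζ => proj (x - η t • gradient (fun u => f u ζ) x)
  have hmem := fun t ht1 htm => mem_of_coupled_recursion Φ (fun _ _ _ => (hproj _).1) hw1 hinit
    hstep (t := t) ht1 htm
  refine ⟨fun t ht1 htm hti => ?_, ?_⟩
  · obtain ⟨hw, hw'⟩ := forall_and.1 (hstep t ht1 htm)
    simp only [hw, hw']
    refine sum_mul_norm_step_sub_step_le_of_fiberwise hp0 hp1 hWconv hproj' hdiff hLip hsmooth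
      (history z z' t) (z t) (z' t) (fun ω₀ => ?_)
      (fun ω₀ => filter_history_eq_history z z' t ω₀ ▸ hcond2 t ht1 htm ω₀)
      (fun ω => (hmem t ht1 (by omega) ω).1) (fun ω => (hmem t ht1 (by omega) ω).2)
      (fun ω ω' => eq_of_history_eq_of_coupled_recursion Φ hinit hstep ht1 (by omega))
      hG.le hδ0 hβ.le (hη0 t) ((le_div_iff₀ (by positivity)).1 (hηb t))
    convert hcond1 t ht1 htm hti ω₀ using 3
    · rw [history_eq_history_iff]
    · exact filter_history_eq_history z z' t ω₀
  · obtain ⟨hw, hw'⟩ := forall_and.1 (hstep i hi1 him)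
    simp only [hw, hw']
    exact hproj'.sum_mul_norm_step_sub_step_le_add hWconv hp0 hp1 _ _ (hη0 i)
      (fun ω => hLip _ _ (hmem i hi1 (by omega) ω).1) (fun ω => hLip _ _ (hmem i hi1 (by omega) ω).2)

/-- (Lemma A.1, the recursion lemma.)  Under the coupled two-sequence
assumptions, the expected distance `ω_t = E‖w_t - w'_t‖` between the projected gradient
descent iterates satisfies `E ω_{t+1} ≤ (1 - η_t μ̃ / 2) E ω_t + 2δ η_t G` for all rounds
`t ≠ i`, and `E ω_{i+1} ≤ E ω_i + 2 η_i G`, where `μ̃ = μ - δβ` and `η_t ≤ μ̃/β²`.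
Randomness is modelled by a finite probability space `(Ω, p)`; conditioning on the
filtration `ℱ_{t-1}` is expressed by summing over sample points with the same history. -/
theorem gd_stability_recursion
    {d : ℕ} {Ω Z : Type*} [Fintype Ω] [DecidableEq Z]
    (p : Ω → ℝ) (hp0 : ∀ ω, 0 ≤ p ω) (hp1 : ∑ ω, p ω = 1)
    (W : Set (EuclideanSpace ℝ (Fin d))) (hWconv : Convex ℝ W) (hWclosed : IsClosed W)
    (proj : EuclideanSpace ℝ (Fin d) → EuclideanSpace ℝ (Fin d))
    (hproj : ∀ x, proj x ∈ W ∧ ∀ w ∈ W, ‖x - proj x‖ ≤ ‖x - w‖)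
    (f : EuclideanSpace ℝ (Fin d) → Z → ℝ)
    (G β μ δ : ℝ) (hG : 0 < G) (hβ : 0 < β) (hμ : 0 < μ)
    (hδ0 : 0 ≤ δ) (hδ : δ ≤ μ / (2 * β))
    (hdiff : ∀ z, Differentiable ℝ (fun w => f w z))
    (hLip : ∀ z, ∀ w ∈ W, ‖gradient (fun u => f u z) w‖ ≤ G)
    (hsmooth : ∀ z, ∀ x ∈ W, ∀ y ∈ W,
      ‖gradient (fun u => f u z) x - gradient (fun u => f u z) y‖ ≤ β * ‖x - y‖)
    (m i : ℕ) (hi1 : 1 ≤ i) (him : i ≤ m)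
    (z z' : ℕ → Ω → Z)
    -- condition (i): `Pr(z_t ≠ z'_t ∣ ℱ_{t-1}) ≤ δ` for all `t ≠ i`
    (hcond1 : ∀ t, 1 ≤ t → t ≤ m → t ≠ i → ∀ ω : Ω,
      (∑ ω' ∈ Finset.univ.filter (fun ω' =>
            (∀ s ∈ Finset.Icc 1 (t - 1), z s ω' = z s ω ∧ z' s ω' = z' s ω) ∧ z t ω' ≠ z' t ω'),
          p ω')
        ≤ δ * ∑ ω' ∈ Finset.univ.filter (fun ω' =>
            ∀ s ∈ Finset.Icc 1 (t - 1), z s ω' = z s ω ∧ z' s ω' = z' s ω), p ω')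
    -- condition (ii): `E[f(w; z_t) ∣ ℱ_{t-1}]` is `μ`-strongly convex on `W`
    (hcond2 : ∀ t, 1 ≤ t → t ≤ m → ∀ ω : Ω,
      0 < (∑ ω' ∈ Finset.univ.filter (fun ω' =>
            ∀ s ∈ Finset.Icc 1 (t - 1), z s ω' = z s ω ∧ z' s ω' = z' s ω), p ω') →
      StrongConvexOnSet W μ (fun w =>
        (∑ ω' ∈ Finset.univ.filter (fun ω' =>
            ∀ s ∈ Finset.Icc 1 (t - 1), z s ω' = z s ω ∧ z' s ω' = z' s ω), p ω' * f w (z t ω'))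
        / (∑ ω' ∈ Finset.univ.filter (fun ω' =>
            ∀ s ∈ Finset.Icc 1 (t - 1), z s ω' = z s ω ∧ z' s ω' = z' s ω), p ω')))
    -- step sizes: only `0 ≤ η_t ≤ μ̃ / β²` is required
    (η : ℕ → ℝ) (hη0 : ∀ t, 0 ≤ η t) (hηb : ∀ t, η t ≤ (μ - δ * β) / β ^ 2)
    -- the coupled projected gradient descent iterates, from the same initialization
    (w1 : EuclideanSpace ℝ (Fin d)) (hw1 : w1 ∈ W)
    (w w' : ℕ → Ω → EuclideanSpace ℝ (Fin d))
    (hinit : ∀ ω, w 1 ω = w1 ∧ w' 1 ω = w1)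
    (hstep : ∀ t, 1 ≤ t → t ≤ m → ∀ ω,
      w (t + 1) ω = proj (w t ω - η t • gradient (fun u => f u (z t ω)) (w t ω)) ∧
      w' (t + 1) ω = proj (w' t ω - η t • gradient (fun u => f u (z' t ω)) (w' t ω))) :
    (∀ t, 1 ≤ t → t ≤ m → t ≠ i →
      ∑ ω, p ω * ‖w (t + 1) ω - w' (t + 1) ω‖
        ≤ (1 - η t * (μ - δ * β) / 2) * ∑ ω, p ω * ‖w t ω - w' t ω‖ + 2 * δ * η t * G)
    ∧ ∑ ω, p ω * ‖w (i + 1) ω - w' (i + 1) ω‖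
        ≤ (∑ ω, p ω * ‖w i ω - w' i ω‖) + 2 * η i * G :=
  gd_stability_recursion_general p hp0 hp1 W hWconv proj hproj f G β μ δ hG hβ hδ0 hdiff hLip
    hsmooth m i hi1 him z z' hcond1 hcond2 η hη0 hηb w1 hw1 w w' hinit hstep
end

section
/- Let μ̃ > 0, β > 0, G > 0, define step sizes η_t = min{ μ̃/β², 2/(μ̃ t) } and μ' := μ̃/2, and let t_0 := min{ t ≥ 1 : 2/(μ̃ t) ≤ μ̃/β² }. Then for any integers 1 ≤ s ≤ n, ∑_{k=s}^{n} 2 η_k G ∏_{t=k+1}^{n} (1 − η_t μ') ≤ 8G/μ̃. -/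
/-! With `a t = η t * (μ̃ / 2)`, the bound `η t ≤ 2 / (μ̃ t)` gives `a t ≤ 1`, and each summand
is `(4G/μ̃) · a k · ∏_{t=k+1}^n (1 - a t)`. These sums telescope to `1 - ∏_{t=s}^n (1 - a t)`,
which is at most `1`, so the whole sum is at most `4G/μ̃`. -/

open Finset

theorem sum_Icc_mul_prod_Icc_succ_one_sub {R : Type*} [CommRing R] (a : ℕ → R) (s n : ℕ) :
    ∑ k ∈ Icc s n, a k * ∏ t ∈ Icc (k + 1) n, (1 - a t) = 1 - ∏ t ∈ Icc s n, (1 - a t) := by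
  induction n with
  | zero =>
    rcases Nat.eq_zero_or_pos s with rfl | hs
    · simp
    · simp [Icc_eq_empty_of_lt hs]
  | succ n ih =>
    rcases le_or_gt s (n + 1) with hs | hs
    · have hsplit : ∀ k ∈ Icc s n, a k * ∏ t ∈ Icc (k + 1) (n + 1), (1 - a t)
          = (a k * ∏ t ∈ Icc (k + 1) n, (1 - a t)) * (1 - a (n + 1)) := fun k hk => by
        rw [prod_Icc_succ_top (by grind), mul_assoc]
      rw [sum_Icc_succ_top hs, sum_congr rfl hsplit, ← sum_mul, ih, prod_Icc_succ_top hs,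
        Icc_eq_empty_of_lt (Nat.lt_succ_self _), prod_empty]
      ring
    · simp [Icc_eq_empty_of_lt hs]

theorem sum_Icc_mul_prod_Icc_succ_one_sub_le_one {R : Type*} [CommRing R] [PartialOrder R]
    [IsOrderedRing R] (a : ℕ → R) (s n : ℕ) (ha : ∀ t ∈ Icc s n, a t ≤ 1) :
    ∑ k ∈ Icc s n, a k * ∏ t ∈ Icc (k + 1) n, (1 - a t) ≤ 1 := by
  rw [sum_Icc_mul_prod_Icc_succ_one_sub, sub_le_self_iff]
  exact prod_nonneg fun t ht => sub_nonneg.2 (ha t ht)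

theorem mul_half_le_one_of_le_two_div {μ x : ℝ} (hμ : 0 < μ) {t : ℕ} (hx : x ≤ 2 / (μ * t)) :
    x * (μ / 2) ≤ 1 :=
  calc x * (μ / 2) ≤ 2 / (μ * t) * (μ / 2) := by gcongr
    -- also at `t = 0`, where both sides are `0` by the convention `x / 0 = 0`
    _ = (t : ℝ)⁻¹ := by field_simp
    _ ≤ 1 := Nat.cast_inv_le_one t

theorem step_size_geometric_sum_bound_general
    (μt β G : ℝ) (hμt : 0 < μt) (hG : 0 < G)
    (η : ℕ → ℝ) (hη : ∀ t : ℕ, η t = min (μt / β ^ 2) (2 / (μt * t)))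
    (s n : ℕ) :
    ∑ k ∈ Finset.Icc s n, 2 * η k * G * ∏ t ∈ Finset.Icc (k + 1) n, (1 - η t * (μt / 2))
      ≤ 8 * G / μt := by
  have hstep : ∀ t, η t * (μt / 2) ≤ 1 := fun t =>
    mul_half_le_one_of_le_two_div hμt ((hη t).trans_le (min_le_right _ _))
  calc ∑ k ∈ Icc s n, 2 * η k * G * ∏ t ∈ Icc (k + 1) n, (1 - η t * (μt / 2))
      = 4 * G / μt *
          ∑ k ∈ Icc s n, η k * (μt / 2) * ∏ t ∈ Icc (k + 1) n, (1 - η t * (μt / 2)) := by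
        rw [mul_sum]
        refine sum_congr rfl fun k _ => ?_
        generalize ∏ t ∈ Icc (k + 1) n, (1 - η t * (μt / 2)) = P
        field_simp
        ring
    _ ≤ 4 * G / μt * 1 := by
        gcongr
        exact sum_Icc_mul_prod_Icc_succ_one_sub_le_one _ s n fun t _ => hstep t
    _ ≤ 8 * G / μt := by
        rw [mul_one]
        gcongr
        norm_num

/-- (Equation (A.3) of the paper.)  For the step-size schedule
`η_t = min{μ̃/β², 2/(μ̃ t)}` and `μ' = μ̃/2`, the weighted geometric sums appearing in
the stability analysis are bounded: `∑_{k=s}^n 2 η_k G ∏_{t=k+1}^n (1 - η_t μ') ≤ 8G/μ̃`. -/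
theorem step_size_geometric_sum_bound
    (μt β G : ℝ) (hμt : 0 < μt) (hβ : 0 < β) (hG : 0 < G)
    (η : ℕ → ℝ) (hη : ∀ t : ℕ, η t = min (μt / β ^ 2) (2 / (μt * t)))
    (s n : ℕ) (hs : 1 ≤ s) (hn : s ≤ n) :
    ∑ k ∈ Finset.Icc s n, 2 * η k * G * ∏ t ∈ Finset.Icc (k + 1) n, (1 - η t * (μt / 2))
      ≤ 8 * G / μt :=
  step_size_geometric_sum_bound_general μt β G hμt hG η hη s n
end

section
/- Let W ⊆ ℝ^d be closed convex with diameter at most D, let F: W → ℝ be λ-strongly convex with minimizer w* := argmin_{w∈W} F(w), and suppose ‖∇F(w)‖ ≤ G for all w ∈ W. Consider τ iterations of projected SGD w_{t+1} = Π_W(w_t − η_t ĝ_t) with arbitrary gradient estimates ĝ_t satisfying ‖ĝ_t‖ ≤ G, and step sizes η_t = min{ μ̃/β², 2/(μ̃ t) } for some μ̃ ≤ λ and β > 0. Then with probability one, ∑_{t=1}^{τ} (F(w_t) − F(w*)) ≤ β²D²/(2μ̃) + (G²/μ̃)(1 + log τ) + ∑_{t=1}^{τ} (∇F(w_t) − ĝ_t)ᵀ(w_t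 − w*). -/
open Finset RealInnerProductSpace

section InnerProductSpace

variable {E : Type*} [NormedAddCommGroup E] [InnerProductSpace ℝ E] {K : Set E} {x p v : E}

theorem inner_sub_le_zero_of_forall_norm_sub_le (hK : Convex ℝ K) (hp : p ∈ K)
    (hmin : ∀ y ∈ K, ‖x - p‖ ≤ ‖x - y‖) (hv : v ∈ K) : ⟪x - p, v - p⟫ ≤ 0 := by
  have : Nonempty K := ⟨⟨p, hp⟩⟩
  refine (norm_eq_iInf_iff_real_inner_le_zero hK hp).1 (le_antisymm ?_ ?_) v hv
  · exact le_ciInf fun y => hmin y y.2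
  · exact ciInf_le ⟨0, Set.forall_mem_range.2 fun y => norm_nonneg _⟩ (⟨p, hp⟩ : K)

theorem norm_sub_le_of_forall_norm_sub_le (hK : Convex ℝ K) (hp : p ∈ K)
    (hmin : ∀ y ∈ K, ‖x - p‖ ≤ ‖x - y‖) (hv : v ∈ K) : ‖p - v‖ ≤ ‖x - v‖ := by
  have hobtuse := inner_sub_le_zero_of_forall_norm_sub_le hK hp hmin hv
  have hsplit : ‖x - v‖ ^ 2 = ‖x - p‖ ^ 2 - 2 * ⟪x - p, v - p⟫ + ‖p - v‖ ^ 2 := by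
    rw [show x - v = (x - p) - (v - p) by abel, norm_sub_sq_real, norm_sub_rev v p]
  rw [← pow_le_pow_iff_left₀ (norm_nonneg _) (norm_nonneg _) two_ne_zero, hsplit]
  nlinarith [sq_nonneg ‖x - p‖]

theorem inner_le_of_norm_sub_le_norm_sub_smul {w w' g : E} {η : ℝ} (hη : 0 < η)
    (h : ‖w' - v‖ ≤ ‖w - η • g - v‖) :
    ⟪g, w - v⟫ ≤ 1 / (2 * η) * (‖w - v‖ ^ 2 - ‖w' - v‖ ^ 2) + η / 2 * ‖g‖ ^ 2 := by
  have hexpand : ‖w - η • g - v‖ ^ 2 = ‖w - v‖ ^ 2 - 2 * η * ⟪g, w - v⟫ + η ^ 2 * ‖g‖ ^ 2 := by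
    rw [show w - η • g - v = (w - v) - η • g by abel, norm_sub_sq_real, real_inner_smul_right,
      norm_smul, Real.norm_of_nonneg hη.le, real_inner_comm]
    ring
  have hsq : ‖w' - v‖ ^ 2 ≤ ‖w - η • g - v‖ ^ 2 := pow_le_pow_left₀ (norm_nonneg _) h 2
  calc ⟪g, w - v⟫ = 1 / (2 * η) * (2 * η * ⟪g, w - v⟫) := by field_simp
    _ ≤ 1 / (2 * η) * (‖w - v‖ ^ 2 - ‖w' - v‖ ^ 2 + η ^ 2 * ‖g‖ ^ 2) := by gcongr; linarith
    _ = _ := by field_simp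

end InnerProductSpace

namespace StrongConvexOnSet

variable {d : ℕ} {W : Set (EuclideanSpace ℝ (Fin d))} {μ : ℝ} {F : EuclideanSpace ℝ (Fin d) → ℝ}

theorem mono (hF : StrongConvexOnSet W μ F) {μ' : ℝ} (hμ' : μ' ≤ μ) :
    StrongConvexOnSet W μ' F := fun x hx y hy => by
  have := hF x hx y hy
  nlinarith [sq_nonneg ‖y - x‖]

theorem sub_le_inner (hF : StrongConvexOnSet W μ F) {x y : EuclideanSpace ℝ (Fin d)}
    (hx : x ∈ W) (hy : y ∈ W) : F x - F y ≤ ⟪gradient F x, x - y⟫ - μ / 2 * ‖x - y‖ ^ 2 := by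
  have := hF x hx y hy
  rw [← neg_sub x y, inner_neg_right, norm_neg] at this
  linarith

theorem sub_le_of_proj_step (hW : Convex ℝ W) (hF : StrongConvexOnSet W μ F)
    {w v g p : EuclideanSpace ℝ (Fin d)} {η : ℝ} (hw : w ∈ W) (hv : v ∈ W) (hη : 0 < η)
    (hp : p ∈ W) (hpmin : ∀ y ∈ W, ‖w - η • g - p‖ ≤ ‖w - η • g - y‖) :
    F w - F v ≤ 1 / (2 * η) * (‖w - v‖ ^ 2 - ‖p - v‖ ^ 2) - μ / 2 * ‖w - v‖ ^ 2
      + η / 2 * ‖g‖ ^ 2 + ⟪gradient F w - g, w - v⟫ := by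
  have hdescent := inner_le_of_norm_sub_le_norm_sub_smul hη
    (norm_sub_le_of_forall_norm_sub_le hW hp hpmin hv)
  have hconvex := hF.sub_le_inner hw hv
  rw [inner_sub_left]
  linarith

end StrongConvexOnSet

theorem sum_Icc_mul_sub_succ_add_le {a r : ℕ → ℝ} {c : ℝ} (hr : ∀ t, 0 ≤ r t)
    (hstep : ∀ t, 1 ≤ t → a (t + 1) ≤ a t + c) {n : ℕ} (hn : 1 ≤ n) :
    ∑ t ∈ Icc 1 n, (a t * (r t - r (t + 1)) - c * r t) + a n * r (n + 1)
      ≤ (a 1 - c) * r 1 := by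
  induction n, hn using Nat.le_induction with
  | base => simp only [Icc_self, sum_singleton]; linarith
  | succ n hn ih =>
    rw [sum_Icc_succ_top (by omega)]
    have : (a (n + 1) - c) * r (n + 1) ≤ a n * r (n + 1) :=
      mul_le_mul_of_nonneg_right (by linarith [hstep n hn]) (hr (n + 1))
    linarith

theorem sum_Icc_mul_sub_succ_le {a r : ℕ → ℝ} {c : ℝ} (hr : ∀ t, 0 ≤ r t)
    (ha : ∀ t, 1 ≤ t → 0 ≤ a t) (hstep : ∀ t, 1 ≤ t → a (t + 1) ≤ a t + c) (n : ℕ) :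
    ∑ t ∈ Icc 1 n, (a t * (r t - r (t + 1)) - c * r t) ≤ max (a 1 - c) 0 * r 1 := by
  rcases Nat.eq_zero_or_pos n with rfl | hn
  · simpa using mul_nonneg (le_max_right (a 1 - c) 0) (hr 1)
  have hsum := sum_Icc_mul_sub_succ_add_le hr hstep hn
  have hlast := mul_nonneg (ha n hn) (hr (n + 1))
  have := mul_le_mul_of_nonneg_right (le_max_left (a 1 - c) 0) (hr 1)
  linarith

theorem one_div_two_mul_min {a b : ℝ} (ha : 0 < a) (hb : 0 < b) :
    1 / (2 * min a b) = max (1 / (2 * a)) (1 / (2 * b)) := by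
  rcases le_total a b with h | h
  · rw [min_eq_left h, max_eq_left (one_div_le_one_div_of_le (by positivity) (by linarith))]
  · rw [min_eq_right h, max_eq_right (one_div_le_one_div_of_le (by positivity) (by linarith))]

theorem sum_Icc_stepSize_telescope_le {μ β R : ℝ} (hμ : 0 < μ) (hβ : 0 < β) {r : ℕ → ℝ}
    (hr : ∀ t, 0 ≤ r t) (hr1 : r 1 ≤ R) (n : ℕ) :
    ∑ t ∈ Icc 1 n, (1 / (2 * min (μ / β ^ 2) (2 / (μ * t))) * (r t - r (t + 1)) - μ / 2 * r t)
      ≤ β ^ 2 * R / (2 * μ) := by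
  have hweight : ∀ t : ℕ, 1 ≤ t →
      1 / (2 * min (μ / β ^ 2) (2 / (μ * t))) = max (β ^ 2 / (2 * μ)) (μ * t / 4) := by
    intro t ht
    have : (0 : ℝ) < t := by exact_mod_cast ht
    rw [one_div_two_mul_min (by positivity) (by positivity)]
    congr 1 <;> field_simp
    norm_num
  refine (sum_Icc_mul_sub_succ_le hr (fun t ht => ?_) (fun t ht => ?_) n).trans ?_
  · rw [hweight t ht]
    exact (le_max_left _ _).trans' (by positivity)
  · rw [hweight t ht, hweight (t + 1) (by omega)]
    push_cast
    exact max_le (by linarith [le_max_left (β ^ 2 / (2 * μ)) (μ * t / 4)])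
      (by linarith [le_max_right (β ^ 2 / (2 * μ)) (μ * t / 4)])
  · have hfirst : max (β ^ 2 / (2 * μ)) (μ * (1 : ℕ) / 4) - μ / 2 ≤ β ^ 2 / (2 * μ) := by
      have : 0 ≤ β ^ 2 / (2 * μ) := by positivity
      push_cast
      exact sub_le_iff_le_add.2 (max_le (by linarith) (by linarith))
    rw [hweight 1 le_rfl]
    calc _ ≤ β ^ 2 / (2 * μ) * R := by
          gcongr
          exacts [hr 1, max_le hfirst (by positivity)]
      _ = _ := by ring

theorem sum_Icc_one_div_le_one_add_log (n : ℕ) :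
    ∑ t ∈ Icc 1 n, (1 : ℝ) / t ≤ 1 + Real.log n := by
  simpa [harmonic_eq_sum_Icc] using harmonic_le_one_add_log n

theorem sgd_convergence_with_gradient_errors_general
    {d : ℕ}
    (W : Set (EuclideanSpace ℝ (Fin d))) (hWconv : Convex ℝ W)
    (D G lam μt β : ℝ) (hβ : 0 < β)
    (hμt : 0 < μt) (hμlam : μt ≤ lam)
    (hdiam : ∀ x ∈ W, ∀ y ∈ W, ‖x - y‖ ≤ D)
    (proj : EuclideanSpace ℝ (Fin d) → EuclideanSpace ℝ (Fin d))
    (hproj : ∀ x, proj x ∈ W ∧ ∀ w ∈ W, ‖x - proj x‖ ≤ ‖x - w‖)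
    (F : EuclideanSpace ℝ (Fin d) → ℝ)
    (hFstrong : StrongConvexOnSet W lam F)
    (wstar : EuclideanSpace ℝ (Fin d)) (hws : wstar ∈ W)
    (η : ℕ → ℝ) (hη : ∀ t : ℕ, η t = min (μt / β ^ 2) (2 / (μt * t)))
    (τ : ℕ)
    (w g : ℕ → EuclideanSpace ℝ (Fin d))
    (hw1 : w 1 ∈ W)
    (hg : ∀ t, ‖g t‖ ≤ G)
    (hstep : ∀ t, 1 ≤ t → w (t + 1) = proj (w t - η t • g t)) :
    ∑ t ∈ Finset.Icc 1 τ, (F (w t) - F wstar)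
      ≤ β ^ 2 * D ^ 2 / (2 * μt) + G ^ 2 / μt * (1 + Real.log τ)
        + ∑ t ∈ Finset.Icc 1 τ, (inner ℝ (gradient F (w t) - g t) (w t - wstar) : ℝ) := by
  have hmem : ∀ t, 1 ≤ t → w t ∈ W := by
    intro t ht
    induction t, ht using Nat.le_induction with
    | base => exact hw1
    | succ t ht _ => rw [hstep t ht]; exact (hproj _).1
  have hbound : ∀ t ∈ Icc 1 τ, F (w t) - F wstar ≤
      (1 / (2 * η t) * (‖w t - wstar‖ ^ 2 - ‖w (t + 1) - wstar‖ ^ 2)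
        - μt / 2 * ‖w t - wstar‖ ^ 2) + G ^ 2 / μt * (1 / t)
      + ⟪gradient F (w t) - g t, w t - wstar⟫ := by
    intro t ht
    have ht : 1 ≤ t := (mem_Icc.1 ht).1
    have htpos : (0 : ℝ) < t := by exact_mod_cast ht
    have hηt : 0 < η t := by rw [hη]; positivity
    have hnoise : η t / 2 * ‖g t‖ ^ 2 ≤ G ^ 2 / μt * (1 / t) :=
      calc η t / 2 * ‖g t‖ ^ 2 ≤ 2 / (μt * t) / 2 * G ^ 2 := by
            gcongr
            · exact hη t ▸ min_le_right _ _
            · exact hg t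
        _ = G ^ 2 / μt * (1 / t) := by field_simp
    have hdescent := (hFstrong.mono hμlam).sub_le_of_proj_step (g := g t) hWconv (hmem t ht)
      hws hηt (hproj _).1 (hproj _).2
    rw [← hstep t ht] at hdescent
    linarith
  have htelescope := sum_Icc_stepSize_telescope_le hμt hβ (r := fun t => ‖w t - wstar‖ ^ 2)
    (fun t => by positivity) (pow_le_pow_left₀ (norm_nonneg _) (hdiam _ hw1 _ hws) 2) τ
  have hharmonic := mul_le_mul_of_nonneg_left (sum_Icc_one_div_le_one_add_log τ)
    (by positivity : 0 ≤ G ^ 2 / μt)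
  simp only [← hη] at htelescope
  rw [mul_sum] at hharmonic
  calc _ ≤ _ := sum_le_sum hbound
    _ = _ := by rw [sum_add_distrib, sum_add_distrib]
    _ ≤ _ := by linarith

/-- (Lemma 4.1 of the paper.)  Projected SGD with arbitrary gradient
estimates `ĝ_t` of norm at most `G` and step sizes `η_t = min{μ̃/β², 2/(μ̃ t)}`, `μ̃ ≤ λ`,
run on a `λ`-strongly convex objective `F` over a set of diameter `D`, satisfies with
probability one
`∑_{t=1}^τ (F(w_t) - F(w*)) ≤ β²D²/(2μ̃) + (G²/μ̃)(1 + log τ) + ∑_t ⟨∇F(w_t) - ĝ_t, w_t - w*⟩`. -/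
theorem sgd_convergence_with_gradient_errors
    {d : ℕ}
    (W : Set (EuclideanSpace ℝ (Fin d))) (hWconv : Convex ℝ W) (hWclosed : IsClosed W)
    (D G lam μt β : ℝ) (hD : 0 ≤ D) (hG : 0 ≤ G) (hβ : 0 < β)
    (hμt : 0 < μt) (hμlam : μt ≤ lam)
    (hdiam : ∀ x ∈ W, ∀ y ∈ W, ‖x - y‖ ≤ D)
    (proj : EuclideanSpace ℝ (Fin d) → EuclideanSpace ℝ (Fin d))
    (hproj : ∀ x, proj x ∈ W ∧ ∀ w ∈ W, ‖x - proj x‖ ≤ ‖x - w‖)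
    (F : EuclideanSpace ℝ (Fin d) → ℝ) (hFdiff : Differentiable ℝ F)
    (hFstrong : StrongConvexOnSet W lam F)
    (hFgrad : ∀ w ∈ W, ‖gradient F w‖ ≤ G)
    (wstar : EuclideanSpace ℝ (Fin d)) (hws : wstar ∈ W)
    (hmin : ∀ w ∈ W, F wstar ≤ F w)
    (η : ℕ → ℝ) (hη : ∀ t : ℕ, η t = min (μt / β ^ 2) (2 / (μt * t)))
    (τ : ℕ) (hτ : 1 ≤ τ)
    (w g : ℕ → EuclideanSpace ℝ (Fin d))
    (hw1 : w 1 ∈ W)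
    (hg : ∀ t, ‖g t‖ ≤ G)
    (hstep : ∀ t, 1 ≤ t → w (t + 1) = proj (w t - η t • g t)) :
    ∑ t ∈ Finset.Icc 1 τ, (F (w t) - F wstar)
      ≤ β ^ 2 * D ^ 2 / (2 * μt) + G ^ 2 / μt * (1 + Real.log τ)
        + ∑ t ∈ Finset.Icc 1 τ, (inner ℝ (gradient F (w t) - g t) (w t - wstar) : ℝ) :=
  sgd_convergence_with_gradient_errors_general W hWconv D G lam μt β hβ hμt hμlam hdiam proj hproj F
    hFstrong wstar hws η hη τ w g hw1 hg hstep
end
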